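/- arXiv:physics/0206094 — 8 statements merged into one kernel-verified Lean document; each statement's English description precedes it below -/
import Mathlib

section
/- Let a ∈ (0,2), let S ⊆ ℝ² be a measurable set, let p > 2/(2−a), and let h : S → ℝ be a nonnegative function belonging to L¹(S) ∩ L^p(S). Then there exists a constant D > 0, depending only on a and p, such that for every x ∈ ℝ², ∫_S h(y)/|x−y|^a dy ≤ D · ‖h‖_{L^p(S)}^{a p′/2} · ‖h‖_{L¹(S)}^{1 − a p′/2}. -/
open MeasureTheory

/-- The Euclidean norm on `ℝ × ℝ`. -/
noncomputable def nrm (z : ℝ × ℝ) : ℝ := Real.sqrt (z.1 ^ 2 + z.2 ^ 2)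

lemma nrm_nonneg (z : ℝ × ℝ) : 0 ≤ nrm z := Real.sqrt_nonneg _

lemma continuous_nrm : Continuous nrm :=
  ((continuous_fst.pow 2).add (continuous_snd.pow 2)).sqrt

lemma nrm_smul (c : ℝ) (z : ℝ × ℝ) : nrm (c • z) = |c| * nrm z := by
  simp only [nrm, Prod.smul_fst, Prod.smul_snd, smul_eq_mul, mul_pow]
  rw [← mul_add, Real.sqrt_mul (sq_nonneg c), Real.sqrt_sq_eq_abs]

lemma nrm_polar (p : ℝ × ℝ) : nrm (polarCoord.symm p) = |p.1| := by
  rw [polarCoord_symm_apply]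
  show Real.sqrt ((p.1 * Real.cos p.2) ^ 2 + (p.1 * Real.sin p.2) ^ 2) = |p.1|
  have : (p.1 * Real.cos p.2) ^ 2 + (p.1 * Real.sin p.2) ^ 2 = p.1 ^ 2 := by
    linear_combination p.1 ^ 2 * (Real.sin_sq_add_cos_sq p.2)
  rw [this, Real.sqrt_sq_eq_abs]

lemma measurableSet_nrm_lt (R : ℝ) : MeasurableSet {z : ℝ × ℝ | nrm z < R} :=
  measurableSet_lt continuous_nrm.measurable measurable_const

lemma measurable_nrm_rpow (b : ℝ) (hb : 0 ≤ b) :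
    Measurable (fun z : ℝ × ℝ => nrm z ^ (-b)) := by
  have : (fun z : ℝ × ℝ => nrm z ^ (-b)) = fun z => (nrm z ^ b)⁻¹ := by
    funext z
    rw [Real.rpow_neg (nrm_nonneg z)]
  rw [this]
  exact ((Real.continuous_rpow_const hb).comp continuous_nrm).measurable.inv

lemma integrableOn_nrm_rpow {b : ℝ} (hb : b < 2) :
    IntegrableOn (fun z : ℝ × ℝ => nrm z ^ (-b)) {z : ℝ × ℝ | nrm z < 1} := by
  set s : Set (ℝ × ℝ) := Set.Ioo (0:ℝ) 1 ×ˢ Set.Ioo (-Real.pi) Real.pi with hs_def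
  have hs : MeasurableSet s := measurableSet_Ioo.prod measurableSet_Ioo
  have hsub : s ⊆ polarCoord.target := by
    rintro p ⟨hp1, hp2⟩
    exact ⟨hp1.1, hp2⟩
  have himg : polarCoord.symm '' s = polarCoord.source ∩ {z : ℝ × ℝ | nrm z < 1} := by
    ext z
    constructor
    · rintro ⟨p, hp, rfl⟩
      refine ⟨polarCoord.map_target (hsub hp), ?_⟩
      show nrm (polarCoord.symm p) < 1
      rw [nrm_polar, abs_of_pos hp.1.1]
      exact hp.1.2
    · rintro ⟨hz, hz1⟩
      refine ⟨polarCoord z, ?_, polarCoord.left_inv hz⟩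
      have ht := polarCoord.map_source hz
      have h1 : (polarCoord z).1 = nrm z := rfl
      exact ⟨⟨ht.1, by rw [h1]; exact hz1⟩, ht.2⟩
  set B : ℝ × ℝ → ℝ × ℝ →L[ℝ] ℝ × ℝ := fun p =>
    LinearMap.toContinuousLinearMap (Matrix.toLin (Module.Basis.finTwoProd ℝ) (Module.Basis.finTwoProd ℝ)
      !![Real.cos p.2, -p.1 * Real.sin p.2; Real.sin p.2, p.1 * Real.cos p.2]) with hB_def
  have B_det : ∀ p : ℝ × ℝ, (B p).det = p.1 := by
    intro p
    conv_rhs => rw [← one_mul p.1, ← Real.cos_sq_add_sin_sq p.2]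
    simp only [hB_def, neg_mul, LinearMap.det_toContinuousLinearMap, LinearMap.det_toLin,
      Matrix.det_fin_two_of, sub_neg_eq_add]
    ring
  have key := integrableOn_image_iff_integrableOn_abs_det_fderiv_smul volume hs
    (fun p _ => (hasFDerivAt_polarCoord_symm p).hasFDerivWithinAt)
    (polarCoord.symm.injOn.mono hsub) (fun z : ℝ × ℝ => nrm z ^ (-b))
  rw [himg] at key
  have hae : (polarCoord.source ∩ {z : ℝ × ℝ | nrm z < 1} : Set (ℝ × ℝ))
      =ᵐ[volume] {z : ℝ × ℝ | nrm z < 1} := by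
    have h2 := polarCoord_source_ae_eq_univ.inter
      (Filter.EventuallyEq.refl _ ({z : ℝ × ℝ | nrm z < 1} : Set (ℝ × ℝ)))
    simpa using h2
  rw [IntegrableOn, ← Measure.restrict_congr_set hae, ← IntegrableOn, key]
  have base : IntegrableOn (fun p : ℝ × ℝ => p.1 ^ (1 - b)) s := by
    rw [IntegrableOn, hs_def, Measure.volume_eq_prod, ← Measure.prod_restrict]
    have h1 : Integrable (fun r : ℝ => r ^ (1 - b)) (volume.restrict (Set.Ioo 0 1)) :=
      (intervalIntegral.integrableOn_Ioo_rpow_iff one_pos).mpr (by linarith)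
    have h2 : Integrable (fun _ : ℝ => (1:ℝ)) (volume.restrict (Set.Ioo (-Real.pi) Real.pi)) :=
      integrableOn_const measure_Ioo_lt_top.ne
    simpa using h1.mul_prod h2
  apply base.congr_fun _ hs
  rintro p ⟨hp1, _⟩
  have hp0 : (0:ℝ) < p.1 := hp1.1
  show p.1 ^ (1 - b) = |(fderivPolarCoordSymm p).det| • nrm (polarCoord.symm p) ^ (-b)
  rw [det_fderivPolarCoordSymm, nrm_polar, abs_of_pos hp0, smul_eq_mul, sub_eq_add_neg,
    Real.rpow_add hp0, Real.rpow_one]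

lemma scale_nrm_rpow {b : ℝ} (hb0 : 0 < b) (hb : b < 2) {R : ℝ} (hR : 0 < R) :
    IntegrableOn (fun z : ℝ × ℝ => nrm z ^ (-b)) {z : ℝ × ℝ | nrm z < R} ∧
    ∫ z in {z : ℝ × ℝ | nrm z < R}, nrm z ^ (-b)
      = R ^ (2 - b) * ∫ z in {z : ℝ × ℝ | nrm z < 1}, nrm z ^ (-b) := by
  have hUR := measurableSet_nrm_lt R
  have hU1 := measurableSet_nrm_lt 1
  have hI1 := integrableOn_nrm_rpow hb
  set F : ℝ × ℝ → ℝ := ({z : ℝ × ℝ | nrm z < 1}).indicator (fun z => nrm z ^ (-b)) with hF_def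
  have hF : Integrable F := (integrable_indicator_iff hU1).mpr hI1
  have hkey : ∀ z : ℝ × ℝ, ({z : ℝ × ℝ | nrm z < R}).indicator
      (fun z => nrm z ^ (-b)) z = R ^ (-b) • F (R⁻¹ • z) := by
    intro z
    have hnrm : nrm (R⁻¹ • z) = R⁻¹ * nrm z := by
      rw [nrm_smul, abs_of_pos (inv_pos.mpr hR)]
    rw [hF_def]
    by_cases hz : nrm z < R
    · have hmem : nrm (R⁻¹ • z) < 1 := by
        rw [hnrm, ← div_eq_inv_mul]
        exact (div_lt_one hR).mpr hz
      rw [Set.indicator_of_mem (show z ∈ {z : ℝ × ℝ | nrm z < R} from hz),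
        Set.indicator_of_mem (show R⁻¹ • z ∈ {z : ℝ × ℝ | nrm z < 1} from hmem)]
      rw [hnrm, Real.mul_rpow (inv_nonneg.mpr hR.le) (nrm_nonneg z), smul_eq_mul,
        ← mul_assoc, ← Real.mul_rpow hR.le (inv_nonneg.mpr hR.le),
        mul_inv_cancel₀ hR.ne', Real.one_rpow, one_mul]
    · have hmem : ¬ (nrm (R⁻¹ • z) < 1) := by
        rw [hnrm, ← div_eq_inv_mul]
        intro hcon
        exact hz ((div_lt_one hR).mp hcon)
      rw [Set.indicator_of_notMem (show z ∉ {z : ℝ × ℝ | nrm z < R} from hz),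
        Set.indicator_of_notMem (show R⁻¹ • z ∉ {z : ℝ × ℝ | nrm z < 1} from hmem), smul_zero]
  have hint : Integrable (fun z : ℝ × ℝ => R ^ (-b) • F (R⁻¹ • z)) := by
    exact (hF.comp_smul (inv_ne_zero hR.ne')).smul (R ^ (-b))
  have hfun : ({z : ℝ × ℝ | nrm z < R}).indicator (fun z => nrm z ^ (-b))
      = fun z : ℝ × ℝ => R ^ (-b) • F (R⁻¹ • z) := funext hkey
  constructor
  · exact (integrable_indicator_iff hUR).mp (hfun ▸ hint)
  · have hfr : Module.finrank ℝ (ℝ × ℝ) = 2 := by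
      simp [Module.finrank_prod]
    have h2 : R ^ (-b) * |R ^ (2:ℕ)| = R ^ (2 - b) := by
      rw [abs_of_pos (pow_pos hR 2),
        show ((R:ℝ) ^ (2:ℕ)) = R ^ ((2:ℕ):ℝ) from (Real.rpow_natCast R 2).symm,
        ← Real.rpow_add hR]
      norm_num
      ring_nf
    rw [← integral_indicator hUR, hfun, integral_smul,
      Measure.integral_comp_inv_smul volume F R, hfr, smul_smul, smul_eq_mul, h2, hF_def,
      integral_indicator hU1]

lemma pow_combine {A B : ℝ} (hA : 0 < A) (hB : 0 < B) (u : ℝ) :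
    A * (B / A) ^ u = A ^ (1 - u) * B ^ u := by
  rw [Real.div_rpow hB.le hA.le, Real.rpow_sub hA, Real.rpow_one]
  have hAu : (0:ℝ) < A ^ u := Real.rpow_pos_of_pos hA u
  field_simp

/-- Lemma 2.1 -/
theorem stmt_0 (a p : ℝ) (ha0 : 0 < a) (ha2 : a < 2) (hp : 2 / (2 - a) < p) :
    ∃ D : ℝ, 0 < D ∧
      ∀ S : Set (ℝ × ℝ), MeasurableSet S →
      ∀ h : ℝ × ℝ → ℝ, (∀ y ∈ S, 0 ≤ h y) →
        IntegrableOn h S →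
        IntegrableOn (fun y => h y ^ p) S →
        ∀ x : ℝ × ℝ,
          (∫ y in S, h y / nrm (x - y) ^ a) ≤
            D * ((∫ y in S, h y ^ p) ^ (1 / p)) ^ (a * (p / (p - 1)) / 2) *
              (∫ y in S, h y) ^ (1 - a * (p / (p - 1)) / 2) := by
  have h2a : (0:ℝ) < 2 - a := by linarith
  have hp1 : 1 < p := lt_trans ((one_lt_div h2a).mpr (by linarith)) hp
  have hp0 : 0 < p := by linarith
  have hpq : p.HolderConjugate (p / (p - 1)) := Real.HolderConjugate.conjExponent hp1
  set q : ℝ := p / (p - 1) with hq_def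
  have hq1 : 1 < q := Real.HolderTriple.lt hpq.symm
  have hq0 : 0 < q := by linarith
  have hb0 : 0 < a * q := mul_pos ha0 hq0
  have hpgt : 2 < p * (2 - a) := by
    rw [div_lt_iff₀ h2a] at hp
    linarith
  have hb2 : a * q < 2 := by
    rw [hq_def, show a * (p / (p - 1)) = a * p / (p - 1) by ring,
      div_lt_iff₀ (by linarith : (0:ℝ) < p - 1)]
    nlinarith
  set K : ℝ := ∫ z in {z : ℝ × ℝ | nrm z < 1}, nrm z ^ (-(a * q)) with hK_def
  have hK0 : 0 ≤ K := setIntegral_nonneg (measurableSet_nrm_lt 1)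
    (fun z _ => Real.rpow_nonneg (nrm_nonneg z) _)
  have hKq0 : 0 ≤ K ^ (1 / q) := Real.rpow_nonneg hK0 _
  refine ⟨K ^ (1 / q) + 1, by linarith, ?_⟩
  intro S hS h h0 h1 hhp x
  have hh0' : 0 ≤ᵐ[volume.restrict S] h :=
    (ae_restrict_iff' hS).mpr (Filter.Eventually.of_forall h0)
  have hhp0' : 0 ≤ᵐ[volume.restrict S] fun y => h y ^ p :=
    (ae_restrict_iff' hS).mpr
      (Filter.Eventually.of_forall fun y hy => Real.rpow_nonneg (h0 y hy) p)
  have hIp0 : 0 ≤ ∫ y in S, h y ^ p :=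
    setIntegral_nonneg hS fun y hy => Real.rpow_nonneg (h0 y hy) p
  have hB0 : 0 ≤ ∫ y in S, h y := setIntegral_nonneg hS h0
  rcases hB0.eq_or_lt with hB | hB
  · -- degenerate case: `∫ h = 0`
    have hz : h =ᵐ[volume.restrict S] 0 :=
      (integral_eq_zero_iff_of_nonneg_ae hh0' h1).mp hB.symm
    have hL : (∫ y in S, h y / nrm (x - y) ^ a) = 0 := by
      have : (fun y => h y / nrm (x - y) ^ a) =ᵐ[volume.restrict S] 0 := by
        filter_upwards [hz] with y hy
        simp [hy]
      rw [integral_congr_ae this]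
      simp
    have hθ : (0:ℝ) < 1 - a * q / 2 := by linarith
    rw [hL, ← hB, Real.zero_rpow (ne_of_gt hθ), mul_zero]
  · -- main case
    have hIp_pos : 0 < ∫ y in S, h y ^ p := by
      rcases hIp0.eq_or_lt with h' | h'
      · exfalso
        have hz : (fun y => h y ^ p) =ᵐ[volume.restrict S] 0 :=
          (integral_eq_zero_iff_of_nonneg_ae hhp0' hhp).mp h'.symm
        have hz' : h =ᵐ[volume.restrict S] 0 := by
          filter_upwards [hz, hh0'] with y hy hy0
          by_contra hne
          have hpos : 0 < h y := lt_of_le_of_ne hy0 (Ne.symm hne)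
          have := Real.rpow_pos_of_pos hpos p
          rw [show h y ^ p = (0:ℝ) from hy] at this
          exact lt_irrefl 0 this
        have : (∫ y in S, h y) = 0 := by
          rw [integral_congr_ae hz']
          simp
        linarith
      · exact h'
    set A : ℝ := (∫ y in S, h y ^ p) ^ (1 / p) with hA_def
    have hA0 : 0 < A := Real.rpow_pos_of_pos hIp_pos _
    set Bv : ℝ := ∫ y in S, h y with hBv_def
    have hBA : 0 < Bv / A := div_pos hB hA0
    set R : ℝ := (Bv / A) ^ (q / 2) with hR_def
    have hR : 0 < R := Real.rpow_pos_of_pos hBA _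
    set Bx : Set (ℝ × ℝ) := {y : ℝ × ℝ | nrm (x - y) < R} with hBx_def
    have hBx : MeasurableSet Bx :=
      measurableSet_lt (continuous_nrm.comp (continuous_const.sub continuous_id)).measurable
        measurable_const
    set g : (ℝ × ℝ) → ℝ := fun y => nrm (x - y) ^ (-a) with hg_def
    have hg_meas : Measurable g :=
      (measurable_nrm_rpow a ha0.le).comp (measurable_const.sub measurable_id)
    have hg0 : ∀ y, 0 ≤ g y := fun y => Real.rpow_nonneg (nrm_nonneg _) _
    obtain ⟨hIUR, hval⟩ := scale_nrm_rpow hb0 hb2 hR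
    rw [← hK_def] at hval
    -- translation of the model integral to the ball around `x`
    set F : (ℝ × ℝ) → ℝ :=
      ({z : ℝ × ℝ | nrm z < R}).indicator (fun z => nrm z ^ (-(a * q))) with hF_def
    have hFint : Integrable F := (integrable_indicator_iff (measurableSet_nrm_lt R)).mpr hIUR
    have hkey : (fun y => F (x - y))
        = Bx.indicator (fun y => nrm (x - y) ^ (-(a * q))) := by
      funext y
      by_cases hy : nrm (x - y) < R
      · rw [hF_def, Set.indicator_of_mem (show x - y ∈ {z : ℝ × ℝ | nrm z < R} from hy),
          Set.indicator_of_mem (show y ∈ Bx from hy)]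
      · rw [hF_def, Set.indicator_of_notMem (show x - y ∉ {z : ℝ × ℝ | nrm z < R} from hy),
          Set.indicator_of_notMem (show y ∉ Bx from hy)]
    have hgbx_int : IntegrableOn (fun y => nrm (x - y) ^ (-(a * q))) Bx := by
      rw [← integrable_indicator_iff hBx, ← hkey]
      exact hFint.comp_sub_left x
    have hgbx_val : ∫ y in Bx, nrm (x - y) ^ (-(a * q)) = R ^ (2 - a * q) * K := by
      have h1' : ∫ y, Bx.indicator (fun y => nrm (x - y) ^ (-(a * q))) y
          = ∫ y, F (x - y) := by rw [← hkey]
      rw [← integral_indicator hBx, h1', integral_sub_left_eq_self F volume x, hF_def,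
        integral_indicator (measurableSet_nrm_lt R), hval]
    -- Hölder on `S ∩ Bx`
    have hSB : MeasurableSet (S ∩ Bx) := hS.inter hBx
    have hq_ne : ENNReal.ofReal q ≠ 0 := by
      simp [ENNReal.ofReal_eq_zero, not_le, hq0]
    have hq_top : ENNReal.ofReal q ≠ ⊤ := ENNReal.ofReal_ne_top
    have hp_ne : ENNReal.ofReal p ≠ 0 := by
      simp [ENNReal.ofReal_eq_zero, not_le, hp0]
    have hp_top : ENNReal.ofReal p ≠ ⊤ := ENNReal.ofReal_ne_top
    have hgq_eq : ∀ y, ‖g y‖ ^ q = nrm (x - y) ^ (-(a * q)) := by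
      intro y
      rw [Real.norm_eq_abs, abs_of_nonneg (hg0 y), hg_def]
      show (nrm (x - y) ^ (-a)) ^ q = nrm (x - y) ^ (-(a * q))
      rw [← Real.rpow_mul (nrm_nonneg _), neg_mul]
    have memg : MemLp g (ENNReal.ofReal q) (volume.restrict (S ∩ Bx)) := by
      have hgaesm : AEStronglyMeasurable g (volume.restrict (S ∩ Bx)) :=
        hg_meas.aestronglyMeasurable
      rw [← memLp_norm_rpow_iff (q := ENNReal.ofReal q) hgaesm hq_ne hq_top,
        ENNReal.div_self hq_ne hq_top, ENNReal.toReal_ofReal hq0.le,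
        memLp_one_iff_integrable]
      have hin : IntegrableOn (fun y => nrm (x - y) ^ (-(a * q))) (S ∩ Bx) :=
        hgbx_int.mono_set Set.inter_subset_right
      have hfe : (fun y => ‖g y‖ ^ q) = fun y => nrm (x - y) ^ (-(a * q)) :=
        funext hgq_eq
      rw [hfe]
      exact hin
    have hhaesm : AEStronglyMeasurable h (volume.restrict (S ∩ Bx)) :=
      h1.aestronglyMeasurable.mono_measure (Measure.restrict_mono Set.inter_subset_left le_rfl)
    have memh : MemLp h (ENNReal.ofReal p) (volume.restrict (S ∩ Bx)) := by
      rw [← memLp_norm_rpow_iff (q := ENNReal.ofReal p) hhaesm hp_ne hp_top,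
        ENNReal.div_self hp_ne hp_top, ENNReal.toReal_ofReal hp0.le,
        memLp_one_iff_integrable]
      have hin : IntegrableOn (fun y => h y ^ p) (S ∩ Bx) :=
        hhp.mono_set Set.inter_subset_left
      refine hin.congr ?_
      refine (ae_restrict_iff' hSB).mpr (Filter.Eventually.of_forall fun y hy => ?_)
      show h y ^ p = ‖h y‖ ^ p
      rw [Real.norm_eq_abs, abs_of_nonneg (h0 y hy.1)]
    have hhn : 0 ≤ᵐ[volume.restrict (S ∩ Bx)] h :=
      (ae_restrict_iff' hSB).mpr (Filter.Eventually.of_forall fun y hy => h0 y hy.1)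
    have holder := integral_mul_le_Lp_mul_Lq_of_nonneg hpq hhn
      (Filter.Eventually.of_forall hg0) memh memg
    have hf1 : (∫ y in S ∩ Bx, h y ^ p) ^ (1 / p) ≤ A := by
      rw [hA_def]
      apply Real.rpow_le_rpow
        (setIntegral_nonneg hSB fun y hy => Real.rpow_nonneg (h0 y hy.1) p) ?_
        (one_div_pos.mpr hp0).le
      exact setIntegral_mono_set hhp hhp0' Set.inter_subset_left.eventuallyLE
    have hf2 : (∫ y in S ∩ Bx, g y ^ q) ^ (1 / q) ≤ (R ^ (2 - a * q) * K) ^ (1 / q) := by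
      apply Real.rpow_le_rpow
        (setIntegral_nonneg hSB fun y _ => Real.rpow_nonneg (hg0 y) q) ?_
        (one_div_pos.mpr hq0).le
      have he : (fun y => g y ^ q) = fun y => nrm (x - y) ^ (-(a * q)) := by
        funext y
        rw [← hgq_eq y, Real.norm_eq_abs, abs_of_nonneg (hg0 y)]
      rw [he, ← hgbx_val]
      exact setIntegral_mono_set hgbx_int
        (Filter.Eventually.of_forall fun y => Real.rpow_nonneg (nrm_nonneg _) _)
        Set.inter_subset_right.eventuallyLE
    have hpqr : (1 : ENNReal) / 1 = 1 / ENNReal.ofReal p + 1 / ENNReal.ofReal q := by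
      simp only [one_div, inv_one]
      exact hpq.inv_add_inv_ennreal.symm
    have hprod1 : IntegrableOn (fun y => h y * g y) (S ∩ Bx) := by
      have hsm : MemLp (h • g) 1 (volume.restrict (S ∩ Bx)) :=
        memg.smul memh (hpqr := ⟨by rw [inv_one]; exact hpq.inv_add_inv_ennreal⟩)
      exact memLp_one_iff_integrable.mp hsm
    -- the far part
    have hbound : ∀ y ∈ S \ Bx, h y * g y ≤ R ^ (-a) * h y := by
      intro y hy
      have hge : R ≤ nrm (x - y) := not_lt.mp hy.2
      have hgle : g y ≤ R ^ (-a) :=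
        Real.rpow_le_rpow_of_nonpos hR hge (by linarith)
      calc h y * g y ≤ h y * R ^ (-a) := mul_le_mul_of_nonneg_left hgle (h0 y hy.1)
        _ = R ^ (-a) * h y := mul_comm _ _
    have hint2 : IntegrableOn (fun y => h y * g y) (S \ Bx) := by
      have hmaj : IntegrableOn (fun y => R ^ (-a) * h y) (S \ Bx) :=
        (h1.mono_set Set.diff_subset).const_mul _
      apply Integrable.mono hmaj
        ((h1.aestronglyMeasurable.mono_measure
          (Measure.restrict_mono Set.diff_subset le_rfl)).mul hg_meas.aestronglyMeasurable)
      refine (ae_restrict_iff' (hS.diff hBx)).mpr (Filter.Eventually.of_forall fun y hy => ?_)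
      show ‖h y * g y‖ ≤ ‖R ^ (-a) * h y‖
      rw [Real.norm_eq_abs, Real.norm_eq_abs,
        abs_of_nonneg (mul_nonneg (h0 y hy.1) (hg0 y)),
        abs_of_nonneg (mul_nonneg (Real.rpow_nonneg hR.le _) (h0 y hy.1))]
      exact hbound y hy
    have hterm2 : ∫ y in S \ Bx, h y * g y ≤ R ^ (-a) * Bv := by
      calc ∫ y in S \ Bx, h y * g y ≤ ∫ y in S \ Bx, R ^ (-a) * h y :=
            setIntegral_mono_on hint2 ((h1.mono_set Set.diff_subset).const_mul _)
              (hS.diff hBx) hbound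
        _ = R ^ (-a) * ∫ y in S \ Bx, h y := by rw [integral_const_mul]
        _ ≤ R ^ (-a) * Bv := by
            apply mul_le_mul_of_nonneg_left ?_ (Real.rpow_nonneg hR.le _)
            rw [hBv_def]
            exact setIntegral_mono_set h1 hh0' Set.diff_subset.eventuallyLE
    -- assemble
    have hSint : IntegrableOn (fun y => h y * g y) S := by
      rw [← Set.inter_union_diff S Bx]
      exact hprod1.union hint2
    have hsplit : ∫ y in S, h y * g y
        = (∫ y in S ∩ Bx, h y * g y) + ∫ y in S \ Bx, h y * g y :=
      (integral_inter_add_diff hBx hSint).symm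
    have hLHS : (∫ y in S, h y / nrm (x - y) ^ a) = ∫ y in S, h y * g y := by
      refine integral_congr_ae (Filter.Eventually.of_forall fun y => ?_)
      show h y / nrm (x - y) ^ a = h y * g y
      rw [hg_def, div_eq_mul_inv, ← Real.rpow_neg (nrm_nonneg _)]
    have hmain : (∫ y in S, h y / nrm (x - y) ^ a)
        ≤ A * (R ^ (2 - a * q) * K) ^ (1 / q) + R ^ (-a) * Bv := by
      rw [hLHS, hsplit]
      have t1 : ∫ y in S ∩ Bx, h y * g y ≤ A * (R ^ (2 - a * q) * K) ^ (1 / q) :=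
        holder.trans (mul_le_mul hf1 hf2
          (Real.rpow_nonneg
            (setIntegral_nonneg hSB fun y _ => Real.rpow_nonneg (hg0 y) q) _) hA0.le)
      linarith
    -- final algebraic identity
    have e1 : A * R ^ ((2 - a * q) / q) = A ^ (a * q / 2) * Bv ^ (1 - a * q / 2) := by
      rw [hR_def, ← Real.rpow_mul hBA.le,
        show q / 2 * ((2 - a * q) / q) = 1 - a * q / 2 by field_simp,
        pow_combine hA0 hB, show (1:ℝ) - (1 - a * q / 2) = a * q / 2 by ring]
    have e2 : Bv * R ^ (-a) = A ^ (a * q / 2) * Bv ^ (1 - a * q / 2) := by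
      rw [hR_def, ← Real.rpow_mul hBA.le, show q / 2 * (-a) = -(a * q / 2) by ring,
        Real.rpow_neg hBA.le, ← Real.inv_rpow hBA.le, inv_div,
        pow_combine hB hA0, mul_comm]
    have halg : A * (R ^ (2 - a * q) * K) ^ (1 / q) + R ^ (-a) * Bv
        = (K ^ (1 / q) + 1) * A ^ (a * q / 2) * Bv ^ (1 - a * q / 2) := by
      rw [Real.mul_rpow (Real.rpow_nonneg hR.le _) hK0, ← Real.rpow_mul hR.le,
        show (2 - a * q) * (1 / q) = (2 - a * q) / q by ring]
      calc A * (R ^ ((2 - a * q) / q) * K ^ (1 / q)) + R ^ (-a) * Bv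
          = (A * R ^ ((2 - a * q) / q)) * K ^ (1 / q) + Bv * R ^ (-a) := by ring
        _ = (A ^ (a * q / 2) * Bv ^ (1 - a * q / 2)) * K ^ (1 / q)
            + A ^ (a * q / 2) * Bv ^ (1 - a * q / 2) := by rw [e1, e2]
        _ = (K ^ (1 / q) + 1) * A ^ (a * q / 2) * Bv ^ (1 - a * q / 2) := by ring
    exact hmain.trans (le_of_eq halg)
end

section
/- Let ω ∈ L¹(ℍ) ∩ L^∞(ℍ) (no sign condition is required). Then there exists a constant D > 0, depending only on ‖ω‖_{L¹} and ‖ω‖_{L^∞}, such that the vertical velocity u₂(x) = (2x₂/π) ∫_ℍ (x₁−y₁) y₂ / (|x−y|² |x−ȳ|²) ω(y) dy satisfies |u₂(x)| ≤ D · x₂ · √(1 + log²(x₂)) for all x = (x₁,x₂) ∈ ℍ. -/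
open MeasureTheory

/-- The upper half-plane `ℍ = {x ∈ ℝ² : x₂ > 0}`. -/
def Hplane : Set (ℝ × ℝ) := {x | 0 < x.2}

/-- Reflection `ȳ = (y₁, -y₂)`. -/
def pbar (z : ℝ × ℝ) : ℝ × ℝ := (z.1, -z.2)

open Set Filter Real intervalIntegral

set_option maxHeartbeats 1000000

lemma log_le_two_sqrt {v : ℝ} (hv : 0 < v) : Real.log v ≤ 2 * Real.sqrt v := by
  have h1 : Real.log v = 2 * Real.log (Real.sqrt v) := by
    rw [Real.log_sqrt hv.le]; ring
  have h2 : Real.log (Real.sqrt v) ≤ Real.sqrt v - 1 :=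
    Real.log_le_sub_one_of_pos (Real.sqrt_pos.2 hv)
  nlinarith [Real.sqrt_nonneg v]

lemma integrable_comp_abs' {f : ℝ → ℝ} (hf : IntegrableOn f (Ioi (0:ℝ))) :
    Integrable (fun x => f |x|) := by
  have int_Ioi : IntegrableOn (fun x => f |x|) (Ioi 0) := by
    refine hf.congr_fun (fun x hx => ?_) measurableSet_Ioi
    rw [abs_of_pos hx]
  have int_Iic : IntegrableOn (fun x ↦ f |x|) (Iic 0) := by
    rw [← Measure.map_neg_eq_self (volume : Measure ℝ)]
    have m : MeasurableEmbedding fun x : ℝ => -x := (Homeomorph.neg ℝ).measurableEmbedding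
    rw [m.integrableOn_map_iff]
    simp_rw [Function.comp_def, abs_neg, neg_preimage, neg_Iic, neg_zero]
    exact (integrableOn_Ici_iff_integrableOn_Ioi (b := 0)).mpr int_Ioi
  have h := int_Iic.union int_Ioi
  rwa [Iic_union_Ioi, integrableOn_univ] at h

lemma inner1d {b c : ℝ} (hb : b ≠ 0) (hc : 0 < c) (hbc : b^2 < c^2) :
    Integrable (fun a : ℝ => |a| / ((a^2+b^2)*(a^2+c^2))) ∧
    ∫ a : ℝ, |a| / ((a^2+b^2)*(a^2+c^2))
      = (Real.log (c^2) - Real.log (b^2))/(c^2-b^2) := by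
  have hb2 : 0 < b ^ 2 := by rcases hb.lt_or_gt with h | h <;> nlinarith
  have hc2 : 0 < c ^ 2 := by positivity
  have hΔ : 0 < c^2 - b^2 := sub_pos.2 hbc
  have hP : ∀ a : ℝ, 0 < a^2 + b^2 := fun a => by positivity
  have hQ : ∀ a : ℝ, 0 < a^2 + c^2 := fun a => by positivity
  set g : ℝ → ℝ := fun a => (Real.log (a^2+b^2) - Real.log (a^2+c^2))/(2*(c^2-b^2)) with hg
  set f₀ : ℝ → ℝ := fun a => a / ((a^2+b^2)*(a^2+c^2)) with hf₀
  have hderiv : ∀ a : ℝ, HasDerivAt g (f₀ a) a := by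
    intro a
    have h1 : HasDerivAt (fun a : ℝ => a^2 + b^2) (2*a) a := by
      simpa using (hasDerivAt_pow 2 a).add_const (b^2)
    have h2 : HasDerivAt (fun a : ℝ => a^2 + c^2) (2*a) a := by
      simpa using (hasDerivAt_pow 2 a).add_const (c^2)
    have hl1 : HasDerivAt (fun a : ℝ => Real.log (a^2+b^2)) ((a^2+b^2)⁻¹ * (2*a)) a :=
      by have := (Real.hasDerivAt_log (hP a).ne').comp a h1; exact this
    have hl2 : HasDerivAt (fun a : ℝ => Real.log (a^2+c^2)) ((a^2+c^2)⁻¹ * (2*a)) a :=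
      by have := (Real.hasDerivAt_log (hQ a).ne').comp a h2; exact this
    have h3 := (hl1.sub hl2).div_const (2*(c^2-b^2))
    refine h3.congr_deriv ?_
    rw [hf₀]
    field_simp
    ring
  have htend : Tendsto g atTop (nhds 0) := by
    have hTop : Tendsto (fun a : ℝ => a^2 + c^2) atTop atTop :=
      tendsto_atTop_add_const_right _ _ (tendsto_pow_atTop two_ne_zero)
    have h0 : Tendsto (fun a : ℝ => (c^2-b^2)/(a^2+c^2)) atTop (nhds 0) :=
      tendsto_const_nhds.div_atTop hTop
    have h1' : Tendsto (fun a : ℝ => 1 - (c^2-b^2)/(a^2+c^2)) atTop (nhds 1) := by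
      simpa using tendsto_const_nhds.sub h0
    have hlog : Tendsto (fun a : ℝ => Real.log (1 - (c^2-b^2)/(a^2+c^2))) atTop (nhds 0) := by
      have := (Real.continuousAt_log one_ne_zero).tendsto.comp h1'
      simpa [Function.comp_def] using this
    have hgeq : g = fun a : ℝ => Real.log (1 - (c^2-b^2)/(a^2+c^2)) / (2*(c^2-b^2)) := by
      funext a
      rw [hg]
      have : (1 : ℝ) - (c^2-b^2)/(a^2+c^2) = (a^2+b^2)/(a^2+c^2) := by
        field_simp
        ring
      rw [this, Real.log_div (hP a).ne' (hQ a).ne']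
    rw [hgeq]
    simpa using hlog.div_const (2*(c^2-b^2))
  have hpos : ∀ a ∈ Ioi (0:ℝ), 0 ≤ f₀ a := by
    intro a ha
    have h1 := hP a; have h2 := hQ a
    exact div_nonneg (le_of_lt ha) (by positivity)
  have hint : IntegrableOn f₀ (Ioi 0) :=
    integrableOn_Ioi_deriv_of_nonneg' (fun a _ => hderiv a) hpos htend
  have hval : ∫ a in Ioi (0:ℝ), f₀ a = 0 - g 0 :=
    integral_Ioi_of_hasDerivAt_of_nonneg' (fun a _ => hderiv a) hpos htend
  have habs_eq : (fun x : ℝ => f₀ |x|) = fun a : ℝ => |a| / ((a^2+b^2)*(a^2+c^2)) := by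
    funext a
    rw [hf₀]
    simp [sq_abs]
  constructor
  · have := integrable_comp_abs' hint
    rwa [habs_eq] at this
  · have h2 : ∫ x : ℝ, f₀ |x| = 2 * ∫ x in Ioi (0:ℝ), f₀ x := integral_comp_abs
    rw [← habs_eq, h2, hval, hg]
    simp only [ne_eq, OfNat.ofNat_ne_zero, not_false_eq_true, zero_pow, zero_add]
    field_simp
    ring

lemma sqrtinv_II {m : ℝ} (hm : 0 ≤ m) :
    IntervalIntegrable (fun s : ℝ => (Real.sqrt |s|)⁻¹) volume 0 m ∧
    ∫ s in (0:ℝ)..m, (Real.sqrt |s|)⁻¹ = 2 * Real.sqrt m := by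
  have hr : (-1 : ℝ) < -(1/2) := by norm_num
  have heq : EqOn (fun s : ℝ => s ^ (-(1/2) : ℝ)) (fun s : ℝ => (Real.sqrt |s|)⁻¹)
      (Icc 0 m) := by
    intro s hs
    rcases eq_or_lt_of_le hs.1 with h | h
    · simp [← h, Real.zero_rpow (by norm_num : (-(1/2) : ℝ) ≠ 0)]
    · have h0 : (0:ℝ) ≤ s := le_of_lt h
      simp only [abs_of_pos h]
      rw [Real.rpow_neg h0, Real.sqrt_eq_rpow]
  have hint : IntervalIntegrable (fun s : ℝ => (Real.sqrt |s|)⁻¹) volume 0 m := by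
    have h1 : IntervalIntegrable (fun s : ℝ => s ^ (-(1/2) : ℝ)) volume 0 m :=
      intervalIntegrable_rpow' hr
    rw [intervalIntegrable_iff_integrableOn_Ioc_of_le hm] at h1 ⊢
    exact h1.congr_fun (heq.mono Ioc_subset_Icc_self) measurableSet_Ioc
  refine ⟨hint, ?_⟩
  have h2 : ∫ s in (0:ℝ)..m, (Real.sqrt |s|)⁻¹ = ∫ s in (0:ℝ)..m, s ^ (-(1/2) : ℝ) := by
    refine (intervalIntegral.integral_congr ?_).symm
    rwa [uIcc_of_le hm]
  rw [h2, integral_rpow (Or.inl hr)]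
  rw [Real.zero_rpow (by norm_num : (-(1/2) : ℝ) + 1 ≠ 0)]
  rw [Real.sqrt_eq_rpow]
  norm_num
  ring

lemma jlem {x₂ : ℝ} (hx : 0 < x₂) :
    IntegrableOn (fun t : ℝ => (Real.sqrt |x₂ - t|)⁻¹) (Ioo 0 (2*x₂)) ∧
    ∫ t in Ioo 0 (2*x₂), (Real.sqrt |x₂ - t|)⁻¹ = 4 * Real.sqrt x₂ := by
  obtain ⟨K1, V1⟩ := sqrtinv_II hx.le
  have K2 : IntervalIntegrable (fun s : ℝ => (Real.sqrt |s|)⁻¹) volume (-x₂) 0 := by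
    have h := (IntervalIntegrable.iff_comp_neg (a := 0) (b := x₂)).mp K1
    simp only [abs_neg, neg_zero] at h
    exact h.symm
  have K3 : IntervalIntegrable (fun s : ℝ => (Real.sqrt |s|)⁻¹) volume (-x₂) x₂ := K2.trans K1
  have J1 : IntervalIntegrable (fun t : ℝ => (Real.sqrt |x₂ - t|)⁻¹) volume 0 (2*x₂) := by
    have h := K3.comp_sub_left x₂
    simp only [sub_neg_eq_add, sub_self] at h
    rw [show x₂ + x₂ = 2*x₂ by ring] at h
    exact h.symm
  constructor
  · rw [← intervalIntegrable_iff_integrableOn_Ioo_of_le (by linarith : (0:ℝ) ≤ 2*x₂)]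
    exact J1
  · have hle : (0:ℝ) ≤ 2*x₂ := by linarith
    rw [← integral_Ioc_eq_integral_Ioo, ← intervalIntegral.integral_of_le hle]
    have hcomp := intervalIntegral.integral_comp_sub_left (a := (0:ℝ)) (b := 2*x₂)
      (fun s : ℝ => (Real.sqrt |s|)⁻¹) x₂
    rw [show x₂ - 2*x₂ = -x₂ by ring, sub_zero] at hcomp
    rw [hcomp]
    have hsplit := (intervalIntegral.integral_add_adjacent_intervals K2 K1).symm
    have hneg := intervalIntegral.integral_comp_neg (a := (0:ℝ)) (b := x₂)
      (f := fun s : ℝ => (Real.sqrt |s|)⁻¹)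
    simp only [abs_neg, neg_zero] at hneg
    rw [hsplit, ← hneg, V1]
    ring


/-- For `ω ∈ L¹(ℍ) ∩ L^∞(ℍ)` (no sign condition), the vertical velocity
`u₂(x) = (2x₂/π) ∫_ℍ (x₁-y₁) y₂ / (|x-y|² |x-ȳ|²) ω(y) dy` satisfies
`|u₂(x)| ≤ D x₂ √(1 + log²(x₂))` on `ℍ`, with `D` depending only on the
`L¹` and `L^∞` norms of `ω`. -/
theorem stmt_7 (A B : ℝ) :
    ∃ D : ℝ, 0 < D ∧
      ∀ ω : ℝ × ℝ → ℝ,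
        IntegrableOn ω Hplane →
        (∫ y in Hplane, |ω y|) ≤ A →
        (∀ y, |ω y| ≤ B) →
        ∀ x ∈ Hplane,
          |(2 * x.2 / Real.pi) *
              ∫ y in Hplane,
                (x.1 - y.1) * y.2 / (nrm (x - y) ^ 2 * nrm (x - pbar y) ^ 2) * ω y| ≤
            D * x.2 * Real.sqrt (1 + Real.log x.2 ^ 2) := by
  refine ⟨|A| + 13*|B| + 1, by positivity, ?_⟩
  intro ω hω hA hB x hx
  have hx2 : 0 < x.2 := hx
  have hA0 : 0 ≤ A := le_trans (integral_nonneg (fun y => abs_nonneg _)) hA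
  have hB0 : 0 ≤ B := le_trans (abs_nonneg _) (hB (0,1))
  set T : ℝ := 2*x.2 + 2 with hT
  have hT2 : (2:ℝ) ≤ T := by rw [hT]; linarith
  have hT0 : 0 < T := by linarith
  set Fq : ℝ × ℝ → ℝ := fun y =>
    (x.1 - y.1) * y.2 / (nrm (x - y) ^ 2 * nrm (x - pbar y) ^ 2) * ω y with hFq
  set G : ℝ × ℝ → ℝ := fun y => |x.1 - y.1| * y.2 /
    (((x.1 - y.1)^2 + (x.2 - y.2)^2) * ((x.1 - y.1)^2 + (x.2 + y.2)^2)) with hG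
  have hden_eq : ∀ y : ℝ × ℝ, nrm (x - y) ^ 2 * nrm (x - pbar y) ^ 2
      = ((x.1 - y.1)^2 + (x.2 - y.2)^2) * ((x.1 - y.1)^2 + (x.2 + y.2)^2) := by
    intro y
    have h1 : nrm (x - y) ^ 2 = (x.1 - y.1)^2 + (x.2 - y.2)^2 := by
      rw [nrm, Real.sq_sqrt (by positivity)]
      simp
    have h2 : nrm (x - pbar y) ^ 2 = (x.1 - y.1)^2 + (x.2 + y.2)^2 := by
      rw [nrm, Real.sq_sqrt (by positivity)]
      simp [pbar, sub_neg_eq_add]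
    rw [h1, h2]
  have habsF : ∀ y : ℝ × ℝ, 0 < y.2 → |Fq y| = G y * |ω y| := by
    intro y hy2
    have hdnn : (0:ℝ) ≤ ((x.1 - y.1)^2 + (x.2 - y.2)^2) * ((x.1 - y.1)^2 + (x.2 + y.2)^2) := by
      positivity
    simp only [hFq, hG]
    rw [hden_eq y, abs_mul, abs_div, abs_mul, abs_of_pos hy2, abs_of_nonneg hdnn]
  have hGnn : ∀ y : ℝ × ℝ, 0 ≤ y.2 → 0 ≤ G y := by
    intro y hy2
    simp only [hG]
    positivity
  -- the inner integral evaluation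
  have hinner : ∀ t : ℝ, 0 < t → t ≠ x.2 →
      (∫⁻ y₁ : ℝ, ENNReal.ofReal (B * G (y₁, t)))
        = ENNReal.ofReal (B * (Real.log ((x.2+t)^2) - Real.log ((x.2-t)^2)) / (4*x.2)) := by
    intro t ht htne
    have hb : x.2 - t ≠ 0 := sub_ne_zero.2 (Ne.symm htne)
    have hc : 0 < x.2 + t := by linarith
    have hbc : (x.2-t)^2 < (x.2+t)^2 := by nlinarith
    obtain ⟨hqInt, hqVal⟩ := inner1d hb hc hbc
    have hcomp : Integrable (fun y₁ : ℝ =>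
        |x.1 - y₁| / (((x.1-y₁)^2+(x.2-t)^2)*((x.1-y₁)^2+(x.2+t)^2))) := by
      have h := (integrable_comp_sub_left
        (fun a : ℝ => |a|/((a^2+(x.2-t)^2)*(a^2+(x.2+t)^2))) x.1).2 hqInt
      exact h
    have hval : ∫ y₁ : ℝ, |x.1 - y₁| / (((x.1-y₁)^2+(x.2-t)^2)*((x.1-y₁)^2+(x.2+t)^2))
        = (Real.log ((x.2+t)^2) - Real.log ((x.2-t)^2))/((x.2+t)^2-(x.2-t)^2) := by
      have h1 := integral_sub_left_eq_self
        (fun a : ℝ => |a|/((a^2+(x.2-t)^2)*(a^2+(x.2+t)^2))) volume x.1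
      rw [h1, hqVal]
    have hpt : ∀ y₁ : ℝ, B * G (y₁, t) = (B*t) *
        (|x.1 - y₁| / (((x.1-y₁)^2+(x.2-t)^2)*((x.1-y₁)^2+(x.2+t)^2))) := by
      intro y₁
      simp only [hG]
      ring
    calc (∫⁻ y₁ : ℝ, ENNReal.ofReal (B * G (y₁, t)))
        = ∫⁻ y₁ : ℝ, ENNReal.ofReal ((B*t) *
            (|x.1 - y₁| / (((x.1-y₁)^2+(x.2-t)^2)*((x.1-y₁)^2+(x.2+t)^2)))) := by
          exact lintegral_congr (fun y₁ => by rw [hpt y₁])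
      _ = ENNReal.ofReal (∫ y₁ : ℝ, (B*t) *
            (|x.1 - y₁| / (((x.1-y₁)^2+(x.2-t)^2)*((x.1-y₁)^2+(x.2+t)^2)))) := by
          refine (ofReal_integral_eq_lintegral_ofReal (hcomp.const_mul (B*t))
            (ae_of_all _ (fun y₁ => ?_))).symm
          exact mul_nonneg (mul_nonneg hB0 ht.le)
            (div_nonneg (abs_nonneg _) (by positivity))
      _ = ENNReal.ofReal (B * (Real.log ((x.2+t)^2) - Real.log ((x.2-t)^2)) / (4*x.2)) := by
          rw [MeasureTheory.integral_const_mul, hval]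
          congr 1
          rw [show (x.2+t)^2-(x.2-t)^2 = 4*(x.2*t) by ring]
          field_simp
  -- near-in-t bound
  have hnear : (∫⁻ t in Ioo 0 (2*x.2), ∫⁻ y₁ : ℝ, ENNReal.ofReal (B * G (y₁, t)))
      ≤ ENNReal.ofReal (4 * Real.sqrt 3 * B) := by
    obtain ⟨jInt, jVal⟩ := jlem hx2
    set C₁ : ℝ := B * Real.sqrt (3*x.2) / x.2 with hC₁
    have hC₁0 : 0 ≤ C₁ := by
      rw [hC₁]
      exact div_nonneg (mul_nonneg hB0 (Real.sqrt_nonneg _)) hx2.le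
    have hne : ∀ᵐ (t:ℝ), t ≠ x.2 := by
      rw [ae_iff]
      simp only [not_not]
      rw [show {a : ℝ | a = x.2} = {x.2} from rfl]
      exact measure_singleton x.2
    have hptw : ∀ᵐ t ∂(volume.restrict (Ioo 0 (2*x.2))),
        (∫⁻ y₁ : ℝ, ENNReal.ofReal (B * G (y₁, t)))
          ≤ ENNReal.ofReal (C₁ * (Real.sqrt |x.2 - t|)⁻¹) := by
      filter_upwards [ae_restrict_mem measurableSet_Ioo, ae_restrict_of_ae hne] with t ht htne
      rw [hinner t ht.1 htne]
      apply ENNReal.ofReal_le_ofReal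
      have hbne : x.2 - t ≠ 0 := sub_ne_zero.2 (Ne.symm htne)
      have hbpos : 0 < |x.2 - t| := abs_pos.2 hbne
      have hcpos : 0 < x.2 + t := by linarith [ht.1]
      have hsb : 0 < Real.sqrt |x.2 - t| := Real.sqrt_pos.2 hbpos
      have hratio : Real.log ((x.2+t)^2) - Real.log ((x.2-t)^2)
          = 2 * (Real.log (x.2+t) - Real.log |x.2-t|) := by
        rw [show ((x.2-t)^2 : ℝ) = |x.2-t|^2 from (sq_abs _).symm,
          Real.log_pow, Real.log_pow]
        push_cast
        ring
      have hlogd : Real.log (x.2+t) - Real.log |x.2-t| = Real.log ((x.2+t)/|x.2-t|) :=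
        (Real.log_div hcpos.ne' hbpos.ne').symm
      have hvpos : 0 < (x.2+t)/|x.2-t| := div_pos hcpos hbpos
      have h2s : Real.log ((x.2+t)/|x.2-t|) ≤ 2 * Real.sqrt ((x.2+t)/|x.2-t|) :=
        log_le_two_sqrt hvpos
      have hmono : Real.sqrt ((x.2+t)/|x.2-t|) ≤ Real.sqrt (3*x.2) / Real.sqrt |x.2-t| := by
        have hs1 : (x.2+t)/|x.2-t| ≤ 3*x.2/|x.2-t| := by
          gcongr
          linarith [ht.2]
        calc Real.sqrt ((x.2+t)/|x.2-t|) ≤ Real.sqrt (3*x.2/|x.2-t|) := Real.sqrt_le_sqrt hs1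
          _ = Real.sqrt (3*x.2) / Real.sqrt |x.2-t| := Real.sqrt_div (by positivity) _
      have hcore : Real.log ((x.2+t)^2) - Real.log ((x.2-t)^2)
          ≤ 4 * (Real.sqrt (3*x.2) / Real.sqrt |x.2-t|) := by
        rw [hratio, hlogd]
        nlinarith [h2s, hmono]
      calc B * (Real.log ((x.2+t)^2) - Real.log ((x.2-t)^2)) / (4*x.2)
          ≤ B * (4 * (Real.sqrt (3*x.2) / Real.sqrt |x.2-t|)) / (4*x.2) := by gcongr
        _ = C₁ * (Real.sqrt |x.2-t|)⁻¹ := by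
            rw [hC₁]
            field_simp
    calc (∫⁻ t in Ioo 0 (2*x.2), ∫⁻ y₁ : ℝ, ENNReal.ofReal (B * G (y₁, t)))
        ≤ ∫⁻ t in Ioo 0 (2*x.2), ENNReal.ofReal (C₁ * (Real.sqrt |x.2 - t|)⁻¹) :=
          lintegral_mono_ae hptw
      _ = ENNReal.ofReal (∫ t in Ioo 0 (2*x.2), C₁ * (Real.sqrt |x.2 - t|)⁻¹) :=
          (ofReal_integral_eq_lintegral_ofReal (jInt.const_mul C₁)
            (ae_of_all _ (fun t => mul_nonneg hC₁0 (inv_nonneg.2 (Real.sqrt_nonneg _))))).symm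
      _ = ENNReal.ofReal (C₁ * (4 * Real.sqrt x.2)) := by rw [MeasureTheory.integral_const_mul, jVal]
      _ ≤ ENNReal.ofReal (4 * Real.sqrt 3 * B) := by
          apply ENNReal.ofReal_le_ofReal
          apply le_of_eq
          have h5 : Real.sqrt (3*x.2) = Real.sqrt 3 * Real.sqrt x.2 :=
            Real.sqrt_mul (by norm_num) _
          have h6 : Real.sqrt x.2 * Real.sqrt x.2 = x.2 := Real.mul_self_sqrt hx2.le
          rw [hC₁, h5]
          field_simp
          linear_combination B * h6
  -- far-in-t bound
  have hfart : (∫⁻ t in Ico (2*x.2) T, ∫⁻ y₁ : ℝ, ENNReal.ofReal (B * G (y₁, t)))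
      ≤ ENNReal.ofReal (B * (Real.log (x.2+2) - Real.log x.2)) := by
    have hcont : ContinuousOn (fun t : ℝ => B/(t - x.2)) (Icc (2*x.2) T) := by
      apply ContinuousOn.div continuousOn_const (continuousOn_id.sub continuousOn_const)
      intro t ht
      have := ht.1
      have : x.2 < t := by linarith
      exact ne_of_gt (by linarith : (0:ℝ) < t - x.2)
    have hle2T : 2*x.2 ≤ T := by rw [hT]; linarith
    have hii : IntervalIntegrable (fun t : ℝ => B/(t - x.2)) volume (2*x.2) T :=
      hcont.intervalIntegrable_of_Icc hle2T
    have hIco : IntegrableOn (fun t : ℝ => B/(t - x.2)) (Ico (2*x.2) T) :=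
      (hcont.integrableOn_Icc).mono_set Ico_subset_Icc_self
    have hFTC : ∫ s in (2*x.2)..T, B/(s - x.2)
        = B * Real.log (x.2+2) - B * Real.log x.2 := by
      have hd : ∀ s ∈ uIcc (2*x.2) T, HasDerivAt (fun u => B * Real.log (u - x.2))
          (B/(s - x.2)) s := by
        intro s hs
        rw [uIcc_of_le hle2T] at hs
        have hs0 : s - x.2 ≠ 0 := ne_of_gt (by linarith [hs.1] : (0:ℝ) < s - x.2)
        have h1 : HasDerivAt (fun u : ℝ => u - x.2) 1 s := (hasDerivAt_id s).sub_const x.2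
        have h2 := (Real.hasDerivAt_log hs0).comp s h1
        have h3 := h2.const_mul B
        refine h3.congr_deriv ?_
        field_simp
      rw [intervalIntegral.integral_eq_sub_of_hasDerivAt hd hii]
      rw [show T - x.2 = x.2 + 2 by rw [hT]; ring, show 2*x.2 - x.2 = x.2 by ring]
    have hptw : ∀ᵐ t ∂(volume.restrict (Ico (2*x.2) T)),
        (∫⁻ y₁ : ℝ, ENNReal.ofReal (B * G (y₁, t)))
          ≤ ENNReal.ofReal (B/(t - x.2)) := by
      filter_upwards [ae_restrict_mem measurableSet_Ico] with t ht
      have ht0 : 0 < t := by linarith [ht.1]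
      have hbx : x.2 < t := by linarith [ht.1]
      have htne : t ≠ x.2 := ne_of_gt hbx
      rw [hinner t ht0 htne]
      apply ENNReal.ofReal_le_ofReal
      have hbpos : 0 < t - x.2 := by linarith
      have hcpos : 0 < x.2 + t := by linarith
      have hratio : Real.log ((x.2+t)^2) - Real.log ((x.2-t)^2)
          = 2 * (Real.log (x.2+t) - Real.log (t-x.2)) := by
        rw [show ((x.2-t)^2 : ℝ) = (t-x.2)^2 by ring, Real.log_pow, Real.log_pow]
        push_cast
        ring
      have hlogd : Real.log (x.2+t) - Real.log (t-x.2) = Real.log ((x.2+t)/(t-x.2)) :=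
        (Real.log_div hcpos.ne' hbpos.ne').symm
      have hval2 : (x.2+t)/(t-x.2) = 1 + 2*x.2/(t-x.2) := by
        field_simp
        ring
      have hupos : 0 < 2*x.2/(t-x.2) := by positivity
      have hlogle : Real.log ((x.2+t)/(t-x.2)) ≤ 2*x.2/(t-x.2) := by
        rw [hval2]
        have := Real.log_le_sub_one_of_pos (by linarith : (0:ℝ) < 1 + 2*x.2/(t-x.2))
        linarith
      have hcore : Real.log ((x.2+t)^2) - Real.log ((x.2-t)^2) ≤ 2*(2*x.2/(t-x.2)) := by
        rw [hratio, hlogd]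
        linarith
      calc B * (Real.log ((x.2+t)^2) - Real.log ((x.2-t)^2)) / (4*x.2)
          ≤ B * (2*(2*x.2/(t-x.2))) / (4*x.2) := by gcongr
        _ = B/(t-x.2) := by
            field_simp
            ring
    calc (∫⁻ t in Ico (2*x.2) T, ∫⁻ y₁ : ℝ, ENNReal.ofReal (B * G (y₁, t)))
        ≤ ∫⁻ t in Ico (2*x.2) T, ENNReal.ofReal (B/(t - x.2)) := lintegral_mono_ae hptw
      _ = ENNReal.ofReal (∫ t in Ico (2*x.2) T, B/(t - x.2)) := by
          refine (ofReal_integral_eq_lintegral_ofReal hIco ?_).symm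
          filter_upwards [ae_restrict_mem measurableSet_Ico] with t ht
          have : (0:ℝ) < t - x.2 := by linarith [ht.1]
          positivity
      _ ≤ ENNReal.ofReal (B * (Real.log (x.2+2) - Real.log x.2)) := by
          apply ENNReal.ofReal_le_ofReal
          rw [integral_Ico_eq_integral_Ioo, ← integral_Ioc_eq_integral_Ioo,
            ← intervalIntegral.integral_of_le hle2T, hFTC]
          linarith [le_refl (B * Real.log (x.2+2))]
  -- strip (Tonelli) bound
  have hle2T : 2*x.2 ≤ T := by rw [hT]; linarith
  have hG' : Measurable G := by
    rw [hG]
    exact (((measurable_const.sub measurable_fst).abs.mul measurable_snd).div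
      ((((measurable_const.sub measurable_fst).pow_const 2).add
        ((measurable_const.sub measurable_snd).pow_const 2)).mul
       (((measurable_const.sub measurable_fst).pow_const 2).add
        ((measurable_const.add measurable_snd).pow_const 2))))
  have hGmeas : Measurable (fun y : ℝ × ℝ => ENNReal.ofReal (B * G y)) :=
    ENNReal.measurable_ofReal.comp (hG'.const_mul B)
  have hstrip : (∫⁻ y in (univ ×ˢ Ioo 0 T : Set (ℝ × ℝ)), ENNReal.ofReal |Fq y|)
      ≤ ENNReal.ofReal (4 * Real.sqrt 3 * B)
        + ENNReal.ofReal (B * (Real.log (x.2+2) - Real.log x.2)) := by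
    have hstep1 : (∫⁻ y in (univ ×ˢ Ioo 0 T : Set (ℝ × ℝ)), ENNReal.ofReal |Fq y|)
        ≤ ∫⁻ y in (univ ×ˢ Ioo 0 T : Set (ℝ × ℝ)), ENNReal.ofReal (B * G y) := by
      refine lintegral_mono_ae ?_
      filter_upwards [ae_restrict_mem (MeasurableSet.univ.prod measurableSet_Ioo)] with y hy
      have hy2 : 0 < y.2 := hy.2.1
      apply ENNReal.ofReal_le_ofReal
      rw [habsF y hy2]
      calc G y * |ω y| ≤ G y * B := mul_le_mul_of_nonneg_left (hB y) (hGnn y hy2.le)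
        _ = B * G y := mul_comm _ _
    have hres : (volume : Measure (ℝ × ℝ)).restrict (univ ×ˢ Ioo 0 T)
        = (volume : Measure ℝ).prod ((volume : Measure ℝ).restrict (Ioo 0 T)) := by
      rw [Measure.volume_eq_prod, ← Measure.prod_restrict, Measure.restrict_univ]
    have hstep2 : (∫⁻ y in (univ ×ˢ Ioo 0 T : Set (ℝ × ℝ)), ENNReal.ofReal (B * G y))
        = ∫⁻ t in Ioo 0 T, ∫⁻ y₁ : ℝ, ENNReal.ofReal (B * G (y₁, t)) := by
      rw [hres]
      exact lintegral_prod_symm _ hGmeas.aemeasurable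
    have hsplitT : (∫⁻ t in Ioo 0 T, ∫⁻ y₁ : ℝ, ENNReal.ofReal (B * G (y₁, t)))
        ≤ (∫⁻ t in Ioo 0 (2*x.2), ∫⁻ y₁ : ℝ, ENNReal.ofReal (B * G (y₁, t)))
          + ∫⁻ t in Ico (2*x.2) T, ∫⁻ y₁ : ℝ, ENNReal.ofReal (B * G (y₁, t)) := by
      rw [← Ioo_union_Ico_eq_Ioo (by linarith : (0:ℝ) < 2*x.2) hle2T]
      exact lintegral_union_le _ _ _
    calc (∫⁻ y in (univ ×ˢ Ioo 0 T : Set (ℝ × ℝ)), ENNReal.ofReal |Fq y|)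
        ≤ ∫⁻ y in (univ ×ˢ Ioo 0 T : Set (ℝ × ℝ)), ENNReal.ofReal (B * G y) := hstep1
      _ = ∫⁻ t in Ioo 0 T, ∫⁻ y₁ : ℝ, ENNReal.ofReal (B * G (y₁, t)) := hstep2
      _ ≤ _ := hsplitT
      _ ≤ ENNReal.ofReal (4 * Real.sqrt 3 * B)
          + ENNReal.ofReal (B * (Real.log (x.2+2) - Real.log x.2)) := add_le_add hnear hfart
  -- far-field bound
  have hfary : (∫⁻ y in (univ ×ˢ Ici T : Set (ℝ × ℝ)), ENNReal.ofReal |Fq y|)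
      ≤ ENNReal.ofReal (A/T^2) := by
    have hsub : (univ ×ˢ Ici T : Set (ℝ × ℝ)) ⊆ Hplane := fun y hy =>
      lt_of_lt_of_le hT0 hy.2
    have hstep1 : (∫⁻ y in (univ ×ˢ Ici T : Set (ℝ × ℝ)), ENNReal.ofReal |Fq y|)
        ≤ ∫⁻ y in (univ ×ˢ Ici T : Set (ℝ × ℝ)), ENNReal.ofReal ((1/T^2) * |ω y|) := by
      refine lintegral_mono_ae ?_
      filter_upwards [ae_restrict_mem (MeasurableSet.univ.prod measurableSet_Ici)] with y hy
      have hyT : T ≤ y.2 := hy.2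
      have hy2 : 0 < y.2 := lt_of_lt_of_le hT0 hyT
      apply ENNReal.ofReal_le_ofReal
      rw [habsF y hy2]
      refine mul_le_mul_of_nonneg_right ?_ (abs_nonneg _)
      have hy2T : 2*x.2 + 2 ≤ y.2 := by rw [hT] at hyT; exact hyT
      have hD1 : (0:ℝ) < (x.1-y.1)^2 + (x.2-y.2)^2 := by nlinarith [sq_nonneg (x.1-y.1)]
      have hD2 : (0:ℝ) < (x.1-y.1)^2 + (x.2+y.2)^2 := by nlinarith [sq_nonneg (x.1-y.1)]
      have e1 : |x.1-y.1| * y.2 ≤ (x.1-y.1)^2 + (x.2-y.2)^2 := by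
        nlinarith [sq_nonneg (|x.1-y.1| - (y.2-x.2)), sq_abs (x.1-y.1),
          abs_nonneg (x.1-y.1),
          mul_nonneg (abs_nonneg (x.1-y.1)) (by linarith : (0:ℝ) ≤ y.2 - 2*x.2)]
      have e2 : T^2 ≤ (x.1-y.1)^2 + (x.2+y.2)^2 := by
        nlinarith [sq_nonneg (x.1-y.1)]
      simp only [hG]
      rw [div_le_div_iff₀ (mul_pos hD1 hD2) (by positivity : (0:ℝ) < T^2)]
      calc |x.1-y.1| * y.2 * T^2
          ≤ ((x.1-y.1)^2+(x.2-y.2)^2) * ((x.1-y.1)^2+(x.2+y.2)^2) :=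
            mul_le_mul e1 e2 (by positivity) hD1.le
        _ = 1 * (((x.1-y.1)^2+(x.2-y.2)^2) * ((x.1-y.1)^2+(x.2+y.2)^2)) := (one_mul _).symm
    calc (∫⁻ y in (univ ×ˢ Ici T : Set (ℝ × ℝ)), ENNReal.ofReal |Fq y|)
        ≤ ∫⁻ y in (univ ×ˢ Ici T : Set (ℝ × ℝ)), ENNReal.ofReal ((1/T^2) * |ω y|) := hstep1
      _ ≤ ∫⁻ y in Hplane, ENNReal.ofReal ((1/T^2) * |ω y|) :=
          lintegral_mono' (Measure.restrict_mono hsub le_rfl) le_rfl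
      _ = ENNReal.ofReal (1/T^2) * ∫⁻ y in Hplane, ENNReal.ofReal |ω y| := by
          simp_rw [ENNReal.ofReal_mul (by positivity : (0:ℝ) ≤ 1/T^2)]
          exact lintegral_const_mul' _ _ ENNReal.ofReal_ne_top
      _ = ENNReal.ofReal (1/T^2) * ENNReal.ofReal (∫ y in Hplane, |ω y|) := by
          rw [← ofReal_integral_eq_lintegral_ofReal hω.abs
            (ae_of_all _ (fun y => abs_nonneg _))]
      _ ≤ ENNReal.ofReal (1/T^2) * ENNReal.ofReal A :=
          mul_le_mul_right (ENNReal.ofReal_le_ofReal hA) _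
      _ = ENNReal.ofReal (A/T^2) := by
          rw [← ENNReal.ofReal_mul (by positivity : (0:ℝ) ≤ 1/T^2)]
          congr 1
          ring
  -- assembly
  have hHset : Hplane = (univ ×ˢ Ioo 0 T : Set (ℝ × ℝ)) ∪ (univ ×ˢ Ici T : Set (ℝ × ℝ)) := by
    rw [← prod_union, Ioo_union_Ici_eq_Ioi hT0]
    ext y
    simp [Hplane, Set.mem_prod]
  have hlogmono : Real.log x.2 ≤ Real.log (x.2 + 2) := Real.log_le_log hx2 (by linarith)
  have hn1 : (0:ℝ) ≤ 4 * Real.sqrt 3 * B :=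
    mul_nonneg (by positivity) hB0
  have hn2 : (0:ℝ) ≤ B * (Real.log (x.2+2) - Real.log x.2) :=
    mul_nonneg hB0 (by linarith)
  have hn3 : (0:ℝ) ≤ A/T^2 := div_nonneg hA0 (by positivity)
  set M : ℝ := 4 * Real.sqrt 3 * B + B * (Real.log (x.2+2) - Real.log x.2) + A/T^2 with hM
  have hM0 : 0 ≤ M := by rw [hM]; linarith
  have key : (∫⁻ y in Hplane, ENNReal.ofReal |Fq y|) ≤ ENNReal.ofReal M := by
    calc (∫⁻ y in Hplane, ENNReal.ofReal |Fq y|)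
        = ∫⁻ y in (univ ×ˢ Ioo 0 T : Set (ℝ × ℝ)) ∪ (univ ×ˢ Ici T : Set (ℝ × ℝ)),
            ENNReal.ofReal |Fq y| := by rw [← hHset]
      _ ≤ (∫⁻ y in (univ ×ˢ Ioo 0 T : Set (ℝ × ℝ)), ENNReal.ofReal |Fq y|)
          + ∫⁻ y in (univ ×ˢ Ici T : Set (ℝ × ℝ)), ENNReal.ofReal |Fq y| :=
          lintegral_union_le _ _ _
      _ ≤ (ENNReal.ofReal (4 * Real.sqrt 3 * B)
          + ENNReal.ofReal (B * (Real.log (x.2+2) - Real.log x.2)))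
          + ENNReal.ofReal (A/T^2) := add_le_add hstrip hfary
      _ = ENNReal.ofReal M := by
          rw [hM, ← ENNReal.ofReal_add hn1 hn2, ← ENNReal.ofReal_add (by linarith) hn3]
  have habs_le : |∫ y in Hplane, Fq y| ≤ M := by
    have h1 := norm_integral_le_lintegral_norm
      (μ := (volume : Measure (ℝ × ℝ)).restrict Hplane) Fq
    simp only [Real.norm_eq_abs] at h1
    exact h1.trans (ENNReal.toReal_le_of_le_ofReal hM0 key)
  -- final arithmetic
  rw [abs_mul, abs_of_pos (by positivity : (0:ℝ) < 2*x.2/Real.pi)]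
  have hs0 : (0:ℝ) ≤ Real.sqrt (1 + Real.log x.2 ^ 2) := Real.sqrt_nonneg _
  have hs1 : (1:ℝ) ≤ Real.sqrt (1 + Real.log x.2 ^ 2) := by
    have h := Real.sqrt_le_sqrt (show (1:ℝ) ≤ 1 + Real.log x.2 ^ 2 by
      nlinarith [sq_nonneg (Real.log x.2)])
    rwa [Real.sqrt_one] at h
  have hsL : |Real.log x.2| ≤ Real.sqrt (1 + Real.log x.2 ^ 2) := by
    rw [← Real.sqrt_sq_eq_abs]
    exact Real.sqrt_le_sqrt (by nlinarith)
  have hsq3 : Real.sqrt 3 ≤ 2 := by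
    have h := Real.sq_sqrt (by norm_num : (0:ℝ) ≤ 3)
    nlinarith [Real.sqrt_nonneg 3]
  have hlogx2 : Real.log (x.2+2) ≤ 2 + |Real.log x.2| := by
    have hlog3 : Real.log 3 ≤ 2 := by
      nlinarith [Real.log_le_sub_one_of_pos (by norm_num : (0:ℝ) < 3)]
    rcases le_or_gt x.2 1 with h | h
    · have h1 : Real.log (x.2+2) ≤ Real.log 3 := Real.log_le_log (by linarith) (by linarith)
      have := abs_nonneg (Real.log x.2)
      linarith
    · have h1 : Real.log (x.2+2) ≤ Real.log (3*x.2) :=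
        Real.log_le_log (by linarith) (by nlinarith)
      rw [Real.log_mul (by norm_num) (by linarith)] at h1
      have h3 : Real.log x.2 ≤ |Real.log x.2| := le_abs_self _
      linarith
  have hAT : A/T^2 ≤ A := div_le_self hA0 (by nlinarith : (1:ℝ) ≤ T^2)
  have hMle : M ≤ (A + 12*B) * Real.sqrt (1 + Real.log x.2 ^ 2) := by
    have t1 : 4 * Real.sqrt 3 * B ≤ 8*B := by nlinarith
    have t2 : B * (Real.log (x.2+2) - Real.log x.2)
        ≤ 2*B + 2*(B * |Real.log x.2|) := by
      nlinarith [neg_le_abs (Real.log x.2), hB0, hlogx2]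
    have u1 : A ≤ A * Real.sqrt (1 + Real.log x.2 ^ 2) := le_mul_of_one_le_right hA0 hs1
    have u2 : B ≤ B * Real.sqrt (1 + Real.log x.2 ^ 2) := le_mul_of_one_le_right hB0 hs1
    have u3 : B * |Real.log x.2| ≤ B * Real.sqrt (1 + Real.log x.2 ^ 2) :=
      mul_le_mul_of_nonneg_left hsL hB0
    rw [hM]
    nlinarith [hAT, t1, t2, u1, u2, u3]
  have h2xpi : 2*x.2/Real.pi ≤ x.2 := by
    rw [div_le_iff₀ Real.pi_pos]
    nlinarith [Real.pi_gt_three]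
  have hAB : A + 12*B ≤ |A| + 13*|B| + 1 := by
    have := le_abs_self A
    have := le_abs_self B
    have := abs_nonneg B
    linarith
  calc 2*x.2/Real.pi * |∫ y in Hplane, Fq y|
      ≤ 2*x.2/Real.pi * M := mul_le_mul_of_nonneg_left habs_le (by positivity)
    _ ≤ x.2 * M := mul_le_mul_of_nonneg_right h2xpi hM0
    _ ≤ x.2 * ((A + 12*B) * Real.sqrt (1 + Real.log x.2 ^ 2)) :=
        mul_le_mul_of_nonneg_left hMle hx2.le
    _ ≤ x.2 * ((|A| + 13*|B| + 1) * Real.sqrt (1 + Real.log x.2 ^ 2)) :=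
        mul_le_mul_of_nonneg_left (mul_le_mul_of_nonneg_right hAB hs0) hx2.le
    _ = (|A| + 13*|B| + 1) * x.2 * Real.sqrt (1 + Real.log x.2 ^ 2) := by ring
end

section
/- Let D > 0 and let X₂ : [0,∞) → (0,∞) be a differentiable function satisfying |X₂′(t)| ≤ D · X₂(t) · √(1 + log²(X₂(t))) for all t ≥ 0. Then X₂(t) ≥ exp(−√(1 + log²(X₂(0))) · e^{Dt}) for all t ≥ 0. -/
/-- If `X₂ : [0,∞) → (0,∞)` is differentiable with
`|X₂′(t)| ≤ D X₂(t) √(1 + log²(X₂(t)))`, then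
`X₂(t) ≥ exp(-√(1 + log²(X₂(0))) e^{Dt})` for all `t ≥ 0`. -/
theorem stmt_8 (D : ℝ) (hD : 0 < D) (X₂ : ℝ → ℝ)
    (hpos : ∀ t, 0 ≤ t → 0 < X₂ t)
    (hdiff : ∀ t, 0 ≤ t → DifferentiableAt ℝ X₂ t)
    (hineq : ∀ t, 0 ≤ t →
      |deriv X₂ t| ≤ D * X₂ t * Real.sqrt (1 + Real.log (X₂ t) ^ 2)) :
    ∀ t, 0 ≤ t →
      X₂ t ≥ Real.exp (-(Real.sqrt (1 + Real.log (X₂ 0) ^ 2) * Real.exp (D * t))) := by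
  intro t ht
  set v : ℝ → ℝ := fun s => Real.sqrt (1 + Real.log (X₂ s) ^ 2) with hv
  set v' : ℝ → ℝ := fun s =>
    (2 * Real.log (X₂ s) * (deriv X₂ s / X₂ s)) / (2 * Real.sqrt (1 + Real.log (X₂ s) ^ 2))
    with hv'
  have harg : ∀ s, 0 < 1 + Real.log (X₂ s) ^ 2 := fun s => by positivity
  have hvpos : ∀ s, 0 < v s := fun s => Real.sqrt_pos.mpr (harg s)
  have habs_le : ∀ s, |Real.log (X₂ s)| ≤ v s := by
    intro s
    calc |Real.log (X₂ s)| = Real.sqrt (Real.log (X₂ s) ^ 2) :=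
          (Real.sqrt_sq_eq_abs _).symm
      _ ≤ v s := Real.sqrt_le_sqrt (by linarith)
  have hderivv : ∀ s, 0 ≤ s → HasDerivAt v (v' s) s := by
    intro s hs
    have hX := (hdiff s hs).hasDerivAt
    have hlog := hX.log (ne_of_gt (hpos s hs))
    have hsq := hlog.pow 2
    have hadd := (hasDerivAt_const s (1 : ℝ)).add hsq
    have := hadd.sqrt (ne_of_gt (harg s))
    convert this using 1
    all_goals simp [hv, hv']
  have hbound : ∀ s ∈ Set.Ico (0 : ℝ) t, ‖v' s‖ ≤ D * ‖v s‖ + 0 := by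
    intro s hs
    have hs0 : (0 : ℝ) ≤ s := hs.1
    have hXp := hpos s hs0
    have hVp := hvpos s
    have hd := hineq s hs0
    have heq : v' s = (Real.log (X₂ s) * deriv X₂ s) / (X₂ s * v s) := by
      rw [hv']
      field_simp
      ring
    rw [Real.norm_eq_abs, heq, abs_div, abs_mul,
      abs_of_pos (mul_pos hXp hVp), Real.norm_eq_abs, abs_of_pos hVp, add_zero]
    rw [div_le_iff₀ (mul_pos hXp hVp)]
    have h1 := habs_le s
    have h2 : |Real.log (X₂ s)| * |deriv X₂ s| ≤ v s * (D * X₂ s * v s) :=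
      mul_le_mul h1 hd (abs_nonneg _) (le_of_lt hVp)
    nlinarith
  have hcont : ContinuousOn v (Set.Icc 0 t) := fun s hs =>
    (hderivv s hs.1).differentiableAt.continuousAt.continuousWithinAt
  have hderiv' : ∀ s ∈ Set.Ico (0 : ℝ) t, HasDerivWithinAt v (v' s) (Set.Ici s) s :=
    fun s hs => (hderivv s hs.1).hasDerivWithinAt
  have ha : ‖v 0‖ ≤ v 0 := by rw [Real.norm_eq_abs, abs_of_pos (hvpos 0)]
  have hgron := norm_le_gronwallBound_of_norm_deriv_right_le hcont hderiv' ha hbound t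
    (Set.mem_Icc.mpr ⟨ht, le_refl t⟩)
  rw [gronwallBound_ε0, sub_zero, Real.norm_eq_abs, abs_of_pos (hvpos t)] at hgron
  have hlog_ge : -(v 0 * Real.exp (D * t)) ≤ Real.log (X₂ t) := by
    have h1 := habs_le t
    have h2 : -(v t) ≤ Real.log (X₂ t) := neg_le_of_abs_le h1
    linarith
  calc Real.exp (-(Real.sqrt (1 + Real.log (X₂ 0) ^ 2) * Real.exp (D * t)))
      = Real.exp (-(v 0 * Real.exp (D * t))) := by rw [hv]
    _ ≤ Real.exp (Real.log (X₂ t)) := Real.exp_le_exp.mpr hlog_ge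
    _ = X₂ t := Real.exp_log (hpos t ht)
end

section
/- If f : [1,∞) → ℝ is differentiable and bounded, then limsup_{t→∞} t · f′(t) ≥ 0. -/
open Filter

/-- If `f : [1,∞) → ℝ` is differentiable and bounded, then
`limsup_{t→∞} t f′(t) ≥ 0`. -/
theorem stmt_13 (f : ℝ → ℝ)
    (hdiff : ∀ t : ℝ, 1 ≤ t → DifferentiableAt ℝ f t)
    (hbd : ∃ B : ℝ, ∀ t : ℝ, 1 ≤ t → |f t| ≤ B) :
    0 ≤ limsup (fun t => t * deriv f t) atTop := by
  by_contra h
  push_neg at h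
  obtain ⟨B, hB⟩ := hbd
  by_cases hb : IsBoundedUnder (· ≤ ·) atTop (fun t => t * deriv f t)
  · set c : ℝ := limsup (fun t => t * deriv f t) atTop / 2 with hc
    have hc0 : c < 0 := by rw [hc]; linarith
    have hlt : limsup (fun t => t * deriv f t) atTop < c := by rw [hc]; linarith
    have hev := eventually_lt_of_limsup_lt hlt hb
    rw [eventually_atTop] at hev
    obtain ⟨T0, hT0⟩ := hev
    set T : ℝ := max T0 1 with hT
    have hT1 : (1:ℝ) ≤ T := le_max_right _ _
    set g : ℝ → ℝ := fun t => f t - c * Real.log t with hg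
    have hanti : AntitoneOn g (Set.Ici T) := by
      apply antitoneOn_of_deriv_nonpos (convex_Ici T)
      · intro x hx
        have hx1 : 1 ≤ x := le_trans hT1 hx
        exact ((hdiff x hx1).sub ((differentiableAt_const c).mul
          (Real.differentiableAt_log (by linarith)))).continuousAt.continuousWithinAt
      · rw [interior_Ici]
        intro x hx
        have hx1 : 1 ≤ x := le_of_lt (lt_of_le_of_lt hT1 hx)
        exact ((hdiff x hx1).sub ((differentiableAt_const c).mul
          (Real.differentiableAt_log (by linarith)))).differentiableWithinAt
      · rw [interior_Ici]
        intro x hx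
        have hx1 : 1 ≤ x := le_of_lt (lt_of_le_of_lt hT1 hx)
        have hxpos : 0 < x := by linarith
        have hd : deriv g x = deriv f x - c * x⁻¹ := by
          rw [hg]
          rw [deriv_fun_sub (g := fun t => c * Real.log t) (hdiff x hx1) ((differentiableAt_const c).mul
            (Real.differentiableAt_log hxpos.ne'))]
          rw [deriv_const_mul _ (Real.differentiableAt_log hxpos.ne'), Real.deriv_log]
        rw [hd]
        have hx0 : x * deriv f x < c :=
          hT0 x (le_of_lt (lt_of_le_of_lt (le_max_left T0 1) hx))
        have hinv : x * x⁻¹ = 1 := mul_inv_cancel₀ hxpos.ne'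
        nlinarith [hx0, hinv, hxpos]
    set M : ℝ := (f T - c * Real.log T + B + 1) / (-c) with hM
    set t : ℝ := max T (Real.exp M) with ht
    have htT : T ≤ t := le_max_left _ _
    have ht1 : 1 ≤ t := le_trans hT1 htT
    have htpos : 0 < t := by linarith
    have hlog : M ≤ Real.log t :=
      (Real.le_log_iff_exp_le htpos).2 (le_max_right _ _)
    have hgle : g t ≤ g T := hanti Set.self_mem_Ici (Set.mem_Ici.2 htT) htT
    have hcM : c * M = -(f T - c * Real.log T + B + 1) := by
      rw [hM]; field_simp [hc0.ne]
    have hcl : c * Real.log t ≤ c * M := mul_le_mul_of_nonpos_left hlog hc0.le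
    have hft := abs_le.1 (hB t ht1)
    simp only [hg] at hgle
    linarith [hgle, hcl, hcM, hft.1]
  · have hempty : {a : ℝ | ∀ᶠ n in atTop, (fun t => t * deriv f t) n ≤ a} = ∅ := by
      rw [Set.eq_empty_iff_forall_notMem]
      intro a ha
      exact hb ⟨a, eventually_map.2 ha⟩
    rw [limsup_eq, hempty, Real.sInf_empty] at h
    exact lt_irrefl 0 h
end

section
/- Let β > 1, C ≥ 0, M > 0, and let μ be a finite nonnegative measure on ℝ supported in [0,M], with decomposition μ = ν + Σ_i m_i δ_{α_i} into its continuous part ν and its atoms m_i > 0 at distinct points α_i. Suppose that |∫ y ψ(y) dμ(y)| ≤ C · Σ_i m_i^β |ψ(α_i)| for every bounded continuous ψ : ℝ → ℝ. Then every atom satisfies α_i ≤ C · m_i^{β−1}. -/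
open MeasureTheory

/-- Lemma 3.6: let `μ = ν + Σ_i m_i δ_{α_i}` be a finite nonnegative measure
supported in `[0,M]`, with continuous part `ν` and atoms `m_i > 0` at the
distinct points of the countable set `A`. If
`|∫ y ψ(y) dμ| ≤ C Σ_i m_i^β |ψ(α_i)|` for every bounded continuous `ψ`,
then every atom satisfies `α ≤ C m_α^{β-1}`. -/
theorem stmt_14 (β C M : ℝ) (hβ : 1 < β) (hC : 0 ≤ C) (hM : 0 < M)
    (μ : Measure ℝ) (hfin : IsFiniteMeasure μ)
    (hsupp : μ (Set.Icc (0 : ℝ) M)ᶜ = 0)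
    (ν : Measure ℝ) (A : Set ℝ) (m : ℝ → ℝ)
    (hA : A.Countable)
    (hν : ∀ x : ℝ, ν {x} = 0)
    (hm : ∀ α ∈ A, 0 < m α)
    (hdecomp : μ = ν + Measure.sum (fun α : A => ENNReal.ofReal (m α) • Measure.dirac (α : ℝ)))
    (hineq : ∀ ψ : ℝ → ℝ, Continuous ψ → (∃ B, ∀ y, |ψ y| ≤ B) →
      |∫ y, y * ψ y ∂μ| ≤ C * ∑' α : A, m α ^ β * |ψ (α : ℝ)|) :
    ∀ α ∈ A, α ≤ C * m α ^ (β - 1) := by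
  classical
  intro α₀ hα₀
  haveI := hA.to_subtype
  set D : Measure ℝ := Measure.sum (fun α : A => ENNReal.ofReal (m α) • Measure.dirac (α : ℝ))
    with hDdef
  have hDle : D ≤ μ := by rw [hdecomp]; exact Measure.le_add_left le_rfl
  have hνle : ν ≤ μ := by rw [hdecomp]; exact Measure.le_add_right le_rfl
  haveI : IsFiniteMeasure ν := isFiniteMeasure_of_le μ hνle
  haveI : IsFiniteMeasure D := isFiniteMeasure_of_le μ hDle
  -- every atom lies in [0, M]
  have hatomD : ∀ α : A, ENNReal.ofReal (m α) ≤ μ {(α : ℝ)} := by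
    intro α
    have h1 := Measure.le_iff'.1 (Measure.le_sum
      (fun α : A => ENNReal.ofReal (m α) • Measure.dirac (α : ℝ)) α) {(α : ℝ)}
    have h2 := Measure.le_iff'.1 hDle {(α : ℝ)}
    simp only [Measure.smul_apply, Measure.dirac_apply, Set.indicator_of_mem (Set.mem_singleton _),
      Pi.one_apply, smul_eq_mul, mul_one] at h1
    exact h1.trans h2
  have hatom : ∀ α : A, (α : ℝ) ∈ Set.Icc (0 : ℝ) M := by
    intro α
    by_contra h
    have h2 : μ {(α : ℝ)} ≤ μ (Set.Icc (0 : ℝ) M)ᶜ :=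
      measure_mono (Set.singleton_subset_iff.2 h)
    rw [hsupp] at h2
    have h3 := (hatomD α).trans h2
    simp only [nonpos_iff_eq_zero, ENNReal.ofReal_eq_zero] at h3
    exact absurd h3 (not_le.2 (hm α α.2))
  -- summability of the masses
  have hDuniv : D Set.univ = ∑' α : A, ENNReal.ofReal (m α) := by
    rw [hDdef, Measure.sum_apply _ MeasurableSet.univ]
    simp
  have hsumE : ∑' α : A, ENNReal.ofReal (m α) ≠ ⊤ := by
    rw [← hDuniv]; exact measure_ne_top D _
  have hsum : Summable (fun α : A => m α) := by
    have h := ENNReal.summable_toReal hsumE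
    refine h.congr fun α => ?_
    exact ENNReal.toReal_ofReal (hm α α.2).le
  -- a uniform bound on the masses and the constant K
  set T : ℝ := max 1 (μ Set.univ).toReal with hTdef
  have hT1 : (1 : ℝ) ≤ T := le_max_left _ _
  have hmleT : ∀ α : A, m α ≤ T := by
    intro α
    have h1 : ENNReal.ofReal (m α) ≤ μ Set.univ := (hatomD α).trans (measure_mono (Set.subset_univ _))
    have h2 : m α ≤ (μ Set.univ).toReal := by
      have := ENNReal.toReal_mono (measure_ne_top μ _) h1
      rwa [ENNReal.toReal_ofReal (hm α α.2).le] at this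
    exact h2.trans (le_max_right _ _)
  set K : ℝ := T ^ (β - 1) with hKdef
  have hK0 : 0 < K := Real.rpow_pos_of_pos (lt_of_lt_of_le one_pos hT1) _
  have hmβ : ∀ α : A, m α ^ β ≤ K * m α := by
    intro α
    have h1 : m α ^ β = m α ^ (β - 1) * m α := by
      rw [show β = (β - 1) + 1 by ring, Real.rpow_add (hm α α.2), Real.rpow_one]
      ring_nf
    rw [h1]
    have h2 : m α ^ (β - 1) ≤ K :=
      Real.rpow_le_rpow (hm α α.2).le (hmleT α) (by linarith)
    exact mul_le_mul_of_nonneg_right h2 (hm α α.2).le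
  have hsumβ : Summable (fun α : A => m α ^ β) :=
    Summable.of_nonneg_of_le (fun α => Real.rpow_nonneg (hm α α.2).le _)
      (fun α => hmβ α) (hsum.mul_left K)
  -- the shrinking intervals
  set s : ℕ → Set ℝ := fun n => Set.Ioo (α₀ - 1 / (n + 1)) (α₀ + 1 / (n + 1)) with hsdef
  have hεpos : ∀ n : ℕ, (0 : ℝ) < 1 / (n + 1) := by
    intro n; positivity
  have hanti : Antitone s := by
    intro i j hij
    have h1 : (1 : ℝ) / (j + 1) ≤ 1 / (i + 1) := by
      apply one_div_le_one_div_of_le (by positivity)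
      exact_mod_cast by omega
    exact Set.Ioo_subset_Ioo (by linarith) (by linarith)
  have hiInter : ⋂ n, s n = {α₀} := by
    ext x
    simp only [Set.mem_iInter, hsdef, Set.mem_Ioo, Set.mem_singleton_iff]
    constructor
    · intro h
      by_contra hx
      have hd : 0 < |x - α₀| := abs_pos.2 (sub_ne_zero.2 hx)
      obtain ⟨n, hn⟩ := exists_nat_one_div_lt hd
      obtain ⟨h1, h2⟩ := h n
      have habs : |x - α₀| < 1 / (n + 1) := abs_sub_lt_iff.2 ⟨by linarith, by linarith⟩
      linarith
    · rintro rfl n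
      constructor <;> linarith [hεpos n]
  -- limits
  have hsmeas : ∀ n, MeasurableSet (s n) := fun n => measurableSet_Ioo
  have htν : Filter.Tendsto (fun n => (ν (s n)).toReal) Filter.atTop (nhds 0) := by
    have h1 : Filter.Tendsto (fun n => ν (s n)) Filter.atTop (nhds (ν (⋂ n, s n))) :=
      tendsto_measure_iInter_atTop (fun n => (hsmeas n).nullMeasurableSet) hanti
        ⟨0, measure_ne_top ν _⟩
    rw [hiInter, hν α₀] at h1
    have h2 := (ENNReal.tendsto_toReal (by simp)).comp h1
    simpa [Function.comp_def] using h2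
  have htμ : Filter.Tendsto (fun n => (μ (s n \ {α₀})).toReal) Filter.atTop (nhds 0) := by
    have h1 : Filter.Tendsto (fun n => μ (s n \ {α₀})) Filter.atTop
        (nhds (μ (⋂ n, s n \ {α₀}))) :=
      tendsto_measure_iInter_atTop
        (fun n => ((hsmeas n).diff (measurableSet_singleton _)).nullMeasurableSet)
        (fun i j hij => Set.diff_subset_diff_left (hanti hij)) ⟨0, measure_ne_top μ _⟩
    have h2 : ⋂ n, s n \ {α₀} = ∅ := by
      apply Set.eq_empty_iff_forall_notMem.2
      intro x hx
      simp only [Set.mem_iInter, Set.mem_diff, Set.mem_singleton_iff] at hx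
      have hx1 : x ∈ ⋂ n, s n := Set.mem_iInter.2 fun n => (hx n).1
      rw [hiInter] at hx1
      exact (hx 0).2 hx1
    rw [h2] at h1
    simp only [measure_empty] at h1
    have h3 := (ENNReal.tendsto_toReal (by simp)).comp h1
    simpa [Function.comp_def] using h3
  have herr : Filter.Tendsto (fun n => (M + 1) * (ν (s n)).toReal
      + C * K * (μ (s n \ {α₀})).toReal) Filter.atTop (nhds 0) := by
    have h1 := (htν.const_mul (M + 1)).add (htμ.const_mul (C * K))
    simpa using h1
  -- the key estimate for each n
  have key : ∀ n : ℕ, m α₀ * α₀ ≤ C * m α₀ ^ β +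
      ((M + 1) * (ν (s n)).toReal + C * K * (μ (s n \ {α₀})).toReal) := by
    intro n
    set ε : ℝ := 1 / (n + 1) with hεdef
    have hε : 0 < ε := hεpos n
    have hε1 : ε ≤ 1 := by
      rw [hεdef, div_le_one (by positivity)]
      have : (0:ℝ) ≤ (n:ℝ) := Nat.cast_nonneg n
      linarith
    set ψ : ℝ → ℝ := fun y => max 0 (1 - |y - α₀| / ε) with hψdef
    have hψc : Continuous ψ := continuous_const.max (by fun_prop)
    have hψ0 : ∀ y, 0 ≤ ψ y := fun y => le_max_left _ _
    have hψ1 : ∀ y, ψ y ≤ 1 := by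
      intro y
      apply max_le (by norm_num)
      have h1 : 0 ≤ |y - α₀| / ε := by positivity
      linarith
    have hψα₀ : ψ α₀ = 1 := by simp [hψdef]
    have hψout : ∀ y, y ∉ s n → ψ y = 0 := by
      intro y hy
      have h1 : ε ≤ |y - α₀| := by
        simp only [hsdef, Set.mem_Ioo, not_and_or, not_lt, hεdef] at hy ⊢
        rcases hy with h | h
        · rw [abs_sub_comm, le_abs]
          left; linarith
        · rw [le_abs]; left; linarith
      have h2 : (1:ℝ) ≤ |y - α₀| / ε := (le_div_iff₀ hε).2 (by linarith)
      simp only [hψdef]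
      rw [max_eq_left (by linarith)]
    have hα₀M : α₀ ∈ Set.Icc (0:ℝ) M := hatom ⟨α₀, hα₀⟩
    -- the test function y * ψ y
    have hfc : Continuous (fun y : ℝ => y * ψ y) := continuous_id.mul hψc
    have hfb : ∀ y, |y * ψ y| ≤ M + 1 := by
      intro y
      by_cases hy : y ∈ s n
      · have hy' : α₀ - ε < y ∧ y < α₀ + ε := by
          simpa [hsdef, hεdef] using hy
        have h1 : |y| ≤ M + 1 := by
          rw [abs_le]
          constructor
          · linarith [hα₀M.1, hy'.1, hM]
          · linarith [hα₀M.2, hy'.2]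
        calc |y * ψ y| = |y| * |ψ y| := abs_mul _ _
          _ ≤ (M + 1) * 1 := by
              apply mul_le_mul h1 _ (abs_nonneg _) (by linarith)
              rw [abs_of_nonneg (hψ0 y)]; exact hψ1 y
          _ = M + 1 := mul_one _
      · rw [hψout y hy, mul_zero, abs_zero]; linarith
    have hfint : Integrable (fun y : ℝ => y * ψ y) μ :=
      Integrable.mono' (integrable_const (M + 1)) hfc.aestronglyMeasurable
        (Filter.Eventually.of_forall fun y => by rw [Real.norm_eq_abs]; exact hfb y)
    have hfν : Integrable (fun y : ℝ => y * ψ y) ν := hfint.mono_measure hνle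
    have hfD : Integrable (fun y : ℝ => y * ψ y) D := hfint.mono_measure hDle
    -- integral decomposition
    have hintD : ∫ y, y * ψ y ∂D = ∑' α : A, m α * ((α : ℝ) * ψ α) := by
      rw [hDdef] at hfD ⊢
      rw [integral_sum_measure hfD]
      refine tsum_congr fun α => ?_
      rw [integral_smul_measure, integral_dirac, ENNReal.toReal_ofReal (hm α α.2).le,
        smul_eq_mul]
    have hintμ : ∫ y, y * ψ y ∂μ = (∫ y, y * ψ y ∂ν) + ∑' α : A, m α * ((α : ℝ) * ψ α) := by
      rw [hdecomp, integral_add_measure hfν hfD, hintD]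
    -- lower bound by the single atom α₀
    have hterm_nonneg : ∀ α : A, 0 ≤ m α * ((α : ℝ) * ψ α) := fun α =>
      mul_nonneg (hm α α.2).le (mul_nonneg (hatom α).1 (hψ0 _))
    have hsum' : Summable (fun α : A => m α * ((α : ℝ) * ψ α)) := by
      refine Summable.of_nonneg_of_le hterm_nonneg (fun α => ?_) (hsum.mul_right (M + 1))
      have h1 : (α : ℝ) * ψ α ≤ M + 1 := by
        calc (α : ℝ) * ψ α ≤ M * 1 :=
              mul_le_mul (hatom α).2 (hψ1 _) (hψ0 _) hM.le
          _ ≤ M + 1 := by linarith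
      exact mul_le_mul_of_nonneg_left h1 (hm α α.2).le
    have hlow : m α₀ * α₀ ≤ ∑' α : A, m α * ((α : ℝ) * ψ α) := by
      have h1 := Summable.le_tsum hsum' ⟨α₀, hα₀⟩ (fun j _ => hterm_nonneg j)
      simpa [hψα₀] using h1
    -- bound on the ν-part
    have hνbound : |∫ y, y * ψ y ∂ν| ≤ (M + 1) * (ν (s n)).toReal := by
      rw [← setIntegral_eq_integral_of_forall_compl_eq_zero
        (fun y hy => by rw [hψout y hy, mul_zero])]
      have h1 := norm_setIntegral_le_of_norm_le_const (C := M + 1) (measure_lt_top ν (s n))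
        (fun x _ => by rw [Real.norm_eq_abs]; exact hfb x)
      simpa [Real.norm_eq_abs, Measure.real] using h1
    -- bound on the atomic sum away from α₀
    set Tset : Set ℝ := s n \ {α₀} with hTsetdef
    have hTmeas : MeasurableSet Tset := (hsmeas n).diff (measurableSet_singleton _)
    have hgsum : Summable (fun α : A => if (α : ℝ) ∈ Tset then m α else 0) := by
      refine Summable.of_nonneg_of_le (fun α => ?_) (fun α => ?_) hsum
      · split
        · exact (hm α α.2).le
        · exact le_rfl
      · split
        · exact le_rfl
        · exact (hm α α.2).le
    have hgle : (∑' α : A, if (α : ℝ) ∈ Tset then m α else 0) ≤ (μ Tset).toReal := by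
      have h1 : (D Tset).toReal
          = ∑' α : A, ((ENNReal.ofReal (m α) • Measure.dirac (α : ℝ)) Tset).toReal := by
        rw [hDdef, Measure.sum_apply _ hTmeas, ENNReal.tsum_toReal_eq]
        intro α
        apply ne_top_of_le_ne_top ENNReal.ofReal_ne_top
        rw [Measure.smul_apply, smul_eq_mul]
        calc ENNReal.ofReal (m α) * Measure.dirac (α : ℝ) Tset
            ≤ ENNReal.ofReal (m α) * 1 := by
              gcongr
              exact prob_le_one
          _ = ENNReal.ofReal (m α) := mul_one _
      have h2 : (∑' α : A, if (α : ℝ) ∈ Tset then m α else 0) = (D Tset).toReal := by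
        rw [h1]
        refine tsum_congr fun α => ?_
        rw [Measure.smul_apply, smul_eq_mul, Measure.dirac_apply]
        by_cases h : (α : ℝ) ∈ Tset
        · simp [h, Set.indicator_of_mem, ENNReal.toReal_ofReal (hm α α.2).le]
        · simp [h, Set.indicator_of_notMem]
      rw [h2]
      exact ENNReal.toReal_mono (measure_ne_top μ _) (Measure.le_iff'.1 hDle _)
    have hsumψ : Summable (fun α : A => m α ^ β * |ψ (α : ℝ)|) := by
      refine Summable.of_nonneg_of_le
        (fun α => mul_nonneg (Real.rpow_nonneg (hm α α.2).le _) (abs_nonneg _))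
        (fun α => ?_) hsumβ
      calc m α ^ β * |ψ (α : ℝ)| ≤ m α ^ β * 1 := by
            apply mul_le_mul_of_nonneg_left _ (Real.rpow_nonneg (hm α α.2).le _)
            rw [abs_of_nonneg (hψ0 _)]; exact hψ1 _
        _ = m α ^ β := mul_one _
    have h3 : (∑' α : A, m α ^ β * |ψ (α : ℝ)|) ≤ m α₀ ^ β + K * (μ Tset).toReal := by
      rw [Summable.tsum_eq_add_tsum_ite hsumψ ⟨α₀, hα₀⟩]
      apply add_le_add
      · rw [hψα₀]; simp
      · calc (∑' α : A, if α = (⟨α₀, hα₀⟩ : A) then 0 else m α ^ β * |ψ (α : ℝ)|)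
            ≤ ∑' α : A, K * (if (α : ℝ) ∈ Tset then m α else 0) := by
              refine Summable.tsum_le_tsum (fun α => ?_) ?_ (hgsum.mul_left K)
              · by_cases hα : α = (⟨α₀, hα₀⟩ : A)
                · subst hα
                  rw [if_pos rfl]
                  refine mul_nonneg hK0.le ?_
                  split
                  · exact (hm _ hα₀).le
                  · exact le_rfl
                · rw [if_neg hα]
                  by_cases hmem : (α : ℝ) ∈ s n
                  · have hne : (α : ℝ) ≠ α₀ := fun h => hα (Subtype.ext h)
                    have hT : (α : ℝ) ∈ Tset := ⟨hmem, hne⟩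
                    rw [if_pos hT]
                    calc m α ^ β * |ψ (α : ℝ)| ≤ m α ^ β * 1 := by
                          apply mul_le_mul_of_nonneg_left _ (Real.rpow_nonneg (hm α α.2).le _)
                          rw [abs_of_nonneg (hψ0 _)]; exact hψ1 _
                      _ = m α ^ β := mul_one _
                      _ ≤ K * m α := hmβ α
                  · have hT : (α : ℝ) ∉ Tset := fun h => hmem h.1
                    rw [if_neg hT, hψout _ hmem, abs_zero, mul_zero, mul_zero]
              · refine Summable.of_nonneg_of_le (fun α => ?_) (fun α => ?_) hsumψ
                · split
                  · exact le_rfl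
                  · exact mul_nonneg (Real.rpow_nonneg (hm α α.2).le _) (abs_nonneg _)
                · split
                  · exact mul_nonneg (Real.rpow_nonneg (hm α α.2).le _) (abs_nonneg _)
                  · exact le_rfl
          _ = K * ∑' α : A, (if (α : ℝ) ∈ Tset then m α else 0) := tsum_mul_left
          _ ≤ K * (μ Tset).toReal :=
              mul_le_mul_of_nonneg_left hgle hK0.le
    -- put everything together
    have hmain := hineq ψ hψc ⟨1, fun y => by rw [abs_of_nonneg (hψ0 y)]; exact hψ1 y⟩
    calc m α₀ * α₀ ≤ ∑' α : A, m α * ((α : ℝ) * ψ α) := hlow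
      _ = (∫ y, y * ψ y ∂μ) - ∫ y, y * ψ y ∂ν := by rw [hintμ]; ring
      _ ≤ |∫ y, y * ψ y ∂μ| + |∫ y, y * ψ y ∂ν| := by
          have h1 := le_abs_self (∫ y, y * ψ y ∂μ)
          have h2 := neg_abs_le (∫ y, y * ψ y ∂ν)
          linarith
      _ ≤ C * (∑' α : A, m α ^ β * |ψ (α : ℝ)|) + (M + 1) * (ν (s n)).toReal :=
          add_le_add hmain hνbound
      _ ≤ C * (m α₀ ^ β + K * (μ Tset).toReal) + (M + 1) * (ν (s n)).toReal := by
          have := mul_le_mul_of_nonneg_left h3 hC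
          linarith
      _ = C * m α₀ ^ β +
          ((M + 1) * (ν (s n)).toReal + C * K * (μ (s n \ {α₀})).toReal) := by
          rw [hTsetdef]; ring
  -- pass to the limit
  have hfinal : m α₀ * α₀ ≤ C * m α₀ ^ β := by
    have h1 : Filter.Tendsto (fun n : ℕ => C * m α₀ ^ β +
        ((M + 1) * (ν (s n)).toReal + C * K * (μ (s n \ {α₀})).toReal))
        Filter.atTop (nhds (C * m α₀ ^ β)) := by
      have h2 := (tendsto_const_nhds (x := C * m α₀ ^ β) (f := Filter.atTop (α := ℕ))).add herr
      simpa using h2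
    exact ge_of_tendsto' h1 key
  -- conclude
  have hm₀ : 0 < m α₀ := hm α₀ hα₀
  have hsplit : m α₀ ^ (β - 1) * m α₀ = m α₀ ^ β := by
    have h1 : m α₀ ^ (β - 1) * m α₀ ^ (1:ℝ) = m α₀ ^ (β - 1 + 1) :=
      (Real.rpow_add hm₀ _ _).symm
    rw [Real.rpow_one] at h1
    rw [h1, sub_add_cancel]
  rw [← mul_le_mul_iff_of_pos_right hm₀]
  calc α₀ * m α₀ = m α₀ * α₀ := mul_comm _ _
    _ ≤ C * m α₀ ^ β := hfinal
    _ = C * m α₀ ^ (β - 1) * m α₀ := by rw [← hsplit]; ring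
end

section
/- Let β > 1, C ≥ 0, M > 0, and let μ be a finite nonnegative measure on ℝ supported in [0,M], with decomposition μ = ν + Σ_i m_i δ_{α_i} into its continuous part ν and its atoms m_i > 0 at distinct points α_i. Suppose that |∫ y ψ(y) dμ(y)| ≤ C · Σ_i m_i^β |ψ(α_i)| for every bounded continuous ψ : ℝ → ℝ. If (a,b) is an open interval with 0 ∉ (a,b) that contains none of the points α_i, then μ((a,b)) = 0. -/
/-!
Test the hypothesis against the tent function `ψ = max 0 (min (x - a) (b - x))`, which is
positive exactly on `(a,b)`. It vanishes at every atom, so the right-hand side is `0` and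
`∫ y ψ(y) dμ = 0`. Since `μ` lives on `[0,∞)`, the integrand is a.e. nonnegative, hence
a.e. zero; as `y ψ(y) ≠ 0` on `(a,b) ∖ {0} = (a,b)`, this forces `μ((a,b)) = 0`.
-/

open MeasureTheory Set Function

def tent (a b x : ℝ) : ℝ := max 0 (min (x - a) (b - x))

section Tent

variable {a b : ℝ}

theorem continuous_tent : Continuous (tent a b) := by
  unfold tent; fun_prop

theorem tent_nonneg (x : ℝ) : 0 ≤ tent a b x := le_max_left _ _

theorem tent_ne_zero_iff {x : ℝ} : tent a b x ≠ 0 ↔ x ∈ Ioo a b := by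
  constructor
  · intro h
    by_contra hx
    refine h (max_eq_left ?_)
    rcases not_and_or.1 hx with hxa | hxb
    · exact min_le_of_left_le (by linarith [not_lt.1 hxa])
    · exact min_le_of_right_le (by linarith [not_lt.1 hxb])
  · rintro ⟨hax, hxb⟩
    exact (lt_max_of_lt_right (lt_min (sub_pos.2 hax) (sub_pos.2 hxb))).ne'

theorem tent_eq_zero_of_notMem {x : ℝ} (hx : x ∉ Ioo a b) : tent a b x = 0 :=
  not_not.1 (mt tent_ne_zero_iff.1 hx)

theorem support_tent : support (tent a b) = Ioo a b :=
  ext fun _ => tent_ne_zero_iff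

theorem hasCompactSupport_tent : HasCompactSupport (tent a b) :=
  HasCompactSupport.intro isCompact_Icc fun _ hx =>
    tent_eq_zero_of_notMem fun h => hx (Ioo_subset_Icc_self h)

theorem support_id_mul_tent (h0 : (0 : ℝ) ∉ Ioo a b) :
    support (fun y => y * tent a b y) = Ioo a b := by
  rw [support_mul, support_tent, inter_eq_right]
  exact fun y hy (hy0 : y = 0) => h0 (hy0 ▸ hy)

theorem measure_Ioo_eq_zero_of_integral_id_mul_tent {μ : Measure ℝ} [IsFiniteMeasureOnCompacts μ]
    (hpos : ∀ᵐ y ∂μ, 0 ≤ y) (h0 : (0 : ℝ) ∉ Ioo a b)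
    (hint : ∫ y, y * tent a b y ∂μ = 0) : μ (Ioo a b) = 0 := by
  have hnonneg : 0 ≤ᵐ[μ] fun y => y * tent a b y := by
    filter_upwards [hpos] with y hy using mul_nonneg hy (tent_nonneg y)
  have hintegrable : Integrable (fun y => y * tent a b y) μ :=
    (continuous_id.mul continuous_tent).integrable_of_hasCompactSupport
      hasCompactSupport_tent.mul_left
  have hae := (integral_eq_zero_iff_of_nonneg_ae hnonneg hintegrable).1 hint
  rw [← support_id_mul_tent h0]
  exact ae_iff.1 hae

end Tent

theorem stmt_15_general (β C M : ℝ)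
    (μ : Measure ℝ) (hfin : IsFiniteMeasure μ)
    (hsupp : μ (Set.Icc (0 : ℝ) M)ᶜ = 0)
    (A : Set ℝ) (m : ℝ → ℝ)
    (hineq : ∀ ψ : ℝ → ℝ, Continuous ψ → (∃ B, ∀ y, |ψ y| ≤ B) →
      |∫ y, y * ψ y ∂μ| ≤ C * ∑' α : A, m α ^ β * |ψ (α : ℝ)|) :
    ∀ a b : ℝ, (0 : ℝ) ∉ Set.Ioo a b → A ∩ Set.Ioo a b = ∅ →
      μ (Set.Ioo a b) = 0 := by
  intro a b h0 hAab
  have hpos : ∀ᵐ y ∂μ, 0 ≤ y :=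
    ae_iff.2 <| measure_mono_null (fun y (hy : ¬0 ≤ y) (hmem : y ∈ Icc 0 M) => hy hmem.1) hsupp
  have hrhs : ∑' α : A, m α ^ β * |tent a b α| = 0 := by
    refine (tsum_congr fun α => ?_).trans tsum_zero
    rw [tent_eq_zero_of_notMem fun h => hAab.subset ⟨α.2, h⟩, abs_zero, mul_zero]
  have hbound : ∃ B, ∀ y, |tent a b y| ≤ B :=
    continuous_tent.bounded_above_of_compact_support hasCompactSupport_tent
  have hint := hineq (tent a b) continuous_tent hbound
  rw [hrhs, mul_zero, abs_nonpos_iff] at hint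
  exact measure_Ioo_eq_zero_of_integral_id_mul_tent hpos h0 hint

/-- Lemma 3.7: let `μ = ν + Σ_i m_i δ_{α_i}` be a finite nonnegative measure
supported in `[0,M]`, with continuous part `ν` and atoms `m_i > 0` at the
distinct points of the countable set `A`. Assume
`|∫ y ψ(y) dμ| ≤ C Σ_i m_i^β |ψ(α_i)|` for every bounded continuous `ψ`.
If `(a,b)` is an open interval avoiding `0` and containing no atom, then
`μ((a,b)) = 0`. -/
theorem stmt_15 (β C M : ℝ) (hβ : 1 < β) (hC : 0 ≤ C) (hM : 0 < M)
    (μ : Measure ℝ) (hfin : IsFiniteMeasure μ)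
    (hsupp : μ (Set.Icc (0 : ℝ) M)ᶜ = 0)
    (ν : Measure ℝ) (A : Set ℝ) (m : ℝ → ℝ)
    (hA : A.Countable)
    (hν : ∀ x : ℝ, ν {x} = 0)
    (hm : ∀ α ∈ A, 0 < m α)
    (hdecomp : μ = ν + Measure.sum (fun α : A => ENNReal.ofReal (m α) • Measure.dirac (α : ℝ)))
    (hineq : ∀ ψ : ℝ → ℝ, Continuous ψ → (∃ B, ∀ y, |ψ y| ≤ B) →
      |∫ y, y * ψ y ∂μ| ≤ C * ∑' α : A, m α ^ β * |ψ (α : ℝ)|) :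
    ∀ a b : ℝ, (0 : ℝ) ∉ Set.Ioo a b → A ∩ Set.Ioo a b = ∅ →
      μ (Set.Ioo a b) = 0 :=
  stmt_15_general β C M μ hfin hsupp A m hineq
end

section
/- Let β > 1, C ≥ 0, M > 0, and let μ be a finite nonnegative measure on ℝ supported in [0,M], with decomposition μ = ν + Σ_i m_i δ_{α_i} into its continuous part ν and its atoms m_i > 0 at distinct points α_i. Suppose that |∫ y ψ(y) dμ(y)| ≤ C · Σ_i m_i^β |ψ(α_i)| for every bounded continuous ψ : ℝ → ℝ. Then the continuous part ν vanishes, so that μ = Σ_i m_i δ_{α_i}; every atom satisfies α_i ≤ C · m_i^{β−1}; and if there are infinitely many atoms then α_i → 0 as i → ∞ (the atoms can accumulate only at 0). -/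
open MeasureTheory Filter Topology

/-- Structure theorem for the limit measure: let `μ = ν + Σ_i m_i δ_{α_i}` be a
finite nonnegative measure supported in `[0,M]`, with continuous part `ν` and
atoms `m_i > 0` at the distinct points of the countable set `A`. If
`|∫ y ψ(y) dμ| ≤ C Σ_i m_i^β |ψ(α_i)|` for every bounded continuous `ψ`, then
the continuous part `ν` vanishes (so `μ` is purely atomic), every atom
satisfies `α ≤ C m_α^{β-1}`, and the atoms can accumulate only at `0`. -/
theorem stmt_16 (β C M : ℝ) (hβ : 1 < β) (hC : 0 ≤ C) (hM : 0 < M)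
    (μ : Measure ℝ) (hfin : IsFiniteMeasure μ)
    (hsupp : μ (Set.Icc (0 : ℝ) M)ᶜ = 0)
    (ν : Measure ℝ) (A : Set ℝ) (m : ℝ → ℝ)
    (hA : A.Countable)
    (hν : ∀ x : ℝ, ν {x} = 0)
    (hm : ∀ α ∈ A, 0 < m α)
    (hdecomp : μ = ν + Measure.sum (fun α : A => ENNReal.ofReal (m α) • Measure.dirac (α : ℝ)))
    (hineq : ∀ ψ : ℝ → ℝ, Continuous ψ → (∃ B, ∀ y, |ψ y| ≤ B) →
      |∫ y, y * ψ y ∂μ| ≤ C * ∑' α : A, m α ^ β * |ψ (α : ℝ)|) :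
    ν = 0 ∧
    μ = Measure.sum (fun α : A => ENNReal.ofReal (m α) • Measure.dirac (α : ℝ)) ∧
    (∀ α ∈ A, α ≤ C * m α ^ (β - 1)) ∧
    (∀ ε : ℝ, 0 < ε → (A \ Set.Ioo (-ε) ε).Finite) := by
  haveI : NoAtoms ν := ⟨hν⟩
  have hνle : ν ≤ μ := by
    rw [hdecomp]
    exact Measure.le_add_right le_rfl
  have hμs : Measure.sum (fun α : A => ENNReal.ofReal (m α) • Measure.dirac (α : ℝ)) ≤ μ := by
    rw [hdecomp]
    exact Measure.le_add_left le_rfl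
  haveI : IsFiniteMeasure ν :=
    ⟨lt_of_le_of_lt (Measure.le_iff'.mp hνle _) (measure_lt_top μ _)⟩
  -- a.e. facts
  have hIccae : ∀ᵐ y ∂μ, y ∈ Set.Icc (0:ℝ) M := by
    have h0 : μ {y : ℝ | y ∉ Set.Icc (0:ℝ) M} = 0 := by
      simpa [Set.compl_def] using hsupp
    exact (measure_eq_zero_iff_ae_notMem.mp h0).mono (fun y hy => not_not.mp hy)
  have hνIccae : ∀ᵐ y ∂ν, y ∈ Set.Icc (0:ℝ) M := (Measure.absolutelyContinuous_of_le hνle).ae_le hIccae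
  -- integrability
  have hintμ : ∀ ψ : ℝ → ℝ, Continuous ψ → (∀ y, |ψ y| ≤ 1) →
      Integrable (fun y => y * ψ y) μ := by
    intro ψ hc hb
    refine Integrable.mono' (integrable_const M) ((continuous_id.mul hc).aestronglyMeasurable) ?_
    filter_upwards [hIccae] with y hy
    have : |y * ψ y| ≤ M := by
      calc |y * ψ y| = |y| * |ψ y| := abs_mul _ _
        _ ≤ M * 1 := mul_le_mul (by rw [abs_of_nonneg hy.1]; exact hy.2) (hb y)
              (abs_nonneg _) hM.le
        _ = M := mul_one M
    rw [Real.norm_eq_abs]; exact this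
  -- the main inequality
  have hmain : ∀ ψ : ℝ → ℝ, Continuous ψ → (∀ y, 0 ≤ ψ y) → (∀ y, ψ y ≤ 1) →
      ∀ ρ : Measure ℝ, ρ ≤ μ →
      ∫ y, y * ψ y ∂ρ ≤ C * ∑' α : A, m (α : ℝ) ^ β * |ψ (α : ℝ)| := by
    intro ψ hc h0 h1 ρ hρ
    have hb : ∀ y, |ψ y| ≤ 1 := fun y => by rw [abs_of_nonneg (h0 y)]; exact h1 y
    have h2 : ∫ y, y * ψ y ∂ρ ≤ ∫ y, y * ψ y ∂μ :=
      integral_mono_measure hρ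
        (by filter_upwards [hIccae] with y hy; exact mul_nonneg hy.1 (h0 y))
        (hintμ ψ hc hb)
    exact h2.trans ((le_abs_self _).trans (hineq ψ hc ⟨1, hb⟩))
  -- summability
  have hsum_ne : (∑' α : A, ENNReal.ofReal (m α)) ≠ ⊤ := by
    have h1 : (∑' α : A, ENNReal.ofReal (m α))
        = Measure.sum (fun α : A => ENNReal.ofReal (m α) • Measure.dirac (α : ℝ)) Set.univ := by
      rw [Measure.sum_apply _ MeasurableSet.univ]
      simp
    rw [h1]
    exact ne_top_of_le_ne_top (measure_ne_top μ _) (Measure.le_iff'.mp hμs _)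
  have hsm : Summable fun α : A => m α := by
    refine (ENNReal.summable_toReal hsum_ne).congr fun α => ?_
    exact ENNReal.toReal_ofReal (hm α α.2).le
  have hβ0 : (0:ℝ) ≤ β - 1 := by linarith
  have hβne : β - 1 ≠ 0 := by linarith
  set T : ℝ := ∑' α : A, m α with hT
  have hTα : ∀ α : A, m α ≤ max 1 T := fun α =>
    le_max_of_le_right (Summable.le_tsum hsm α fun j _ => (hm j j.2).le)
  have hrpow_split : ∀ α : A, m (α:ℝ) ^ β = m (α:ℝ) ^ (β - 1) * m (α:ℝ) := by
    intro α
    have h := Real.rpow_add (hm α α.2) (β-1) 1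
    rw [sub_add_cancel, Real.rpow_one] at h
    exact h
  have hsmβ : Summable fun α : A => m (α:ℝ) ^ β := by
    refine Summable.of_nonneg_of_le (fun α => Real.rpow_nonneg (hm α α.2).le β)
      (fun α => ?_) (hsm.mul_left ((max 1 T) ^ (β-1)))
    calc m (α:ℝ) ^ β = m (α:ℝ) ^ (β - 1) * m (α:ℝ) := hrpow_split α
      _ ≤ (max 1 T) ^ (β-1) * m (α:ℝ) :=
          mul_le_mul_of_nonneg_right
            (Real.rpow_le_rpow (hm α α.2).le (hTα α) hβ0) (hm α α.2).le
  -- tails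
  have htail : ∀ δ : ℝ, 0 < δ →
      ∃ t : Finset A, (∑' x : {x : A // x ∉ t}, m ((x : A) : ℝ) ^ β) < δ := by
    intro δ hδ
    have h1 := tendsto_tsum_compl_atTop_zero (fun α : A => m (α:ℝ) ^ β)
    exact (h1.eventually_lt_const hδ).exists
  -- atoms in [0, M]
  have hAmem : ∀ α ∈ A, α ∈ Set.Icc (0:ℝ) M := by
    intro α hα
    by_contra hmem
    have hsub : {α} ⊆ (Set.Icc (0:ℝ) M)ᶜ := by
      intro y hy
      rw [Set.mem_singleton_iff] at hy
      subst hy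
      exact hmem
    have h1 : μ {α} = 0 := measure_mono_null hsub hsupp
    have h2 := Measure.le_iff'.mp (le_trans (Measure.le_sum _ ⟨α, hα⟩) hμs) {α}
    rw [h1] at h2
    have h3 : ENNReal.ofReal (m α) = 0 := by
      simpa [Measure.smul_apply, Measure.dirac_apply' _ (measurableSet_singleton α),
        Set.indicator_of_mem (Set.mem_singleton α)] using h2
    rw [ENNReal.ofReal_eq_zero] at h3
    exact absurd h3 (not_le.mpr (hm α hα))
  -- Part 1 : ν = 0
  have key1 : ∫ y, y ∂ν = 0 := by
    have hnonneg : 0 ≤ ∫ y, y ∂ν :=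
      integral_nonneg_of_ae (hνIccae.mono fun y hy => hy.1)
    have hub : ∀ ε : ℝ, 0 < ε → ∫ y, y ∂ν ≤ 0 + ε := by
      intro ε hε
      obtain ⟨t, ht⟩ := htail (ε / (C+1)) (div_pos hε (by linarith))
      set ψ : ℕ → ℝ → ℝ := fun n y => ∏ f ∈ t, min 1 ((n+1 : ℝ) * |y - (f : ℝ)|) with hψ
      have hcont : ∀ n, Continuous (ψ n) := by
        intro n
        exact continuous_finset_prod t fun f _ =>
          continuous_const.min (continuous_const.mul ((continuous_id.sub continuous_const).abs))
      have h0ψ : ∀ n y, 0 ≤ ψ n y := fun n y =>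
        Finset.prod_nonneg fun f _ => le_min zero_le_one (by positivity)
      have h1ψ : ∀ n y, ψ n y ≤ 1 := fun n y =>
        Finset.prod_le_one (fun f _ => le_min zero_le_one (by positivity))
          (fun f _ => min_le_left _ _)
      -- tsum bound
      have hts : ∀ n, (∑' α : A, m (α:ℝ) ^ β * |ψ n (α:ℝ)|)
          ≤ ∑' x : {x : A // x ∉ t}, m ((x : A) : ℝ) ^ β := by
        intro n
        have hrw : (∑' x : {x : A // x ∉ t}, m ((x : A) : ℝ) ^ β)
            = ∑' α : A, Set.indicator {x : A | x ∉ t} (fun α : A => m (α:ℝ) ^ β) α :=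
          tsum_subtype {x : A | x ∉ t} (fun α : A => m (α:ℝ) ^ β)
        rw [hrw]
        refine Summable.tsum_le_tsum (fun α => ?_) ?_ (hsmβ.indicator _)
        · by_cases hαt : α ∈ t
          · have hz : ψ n (α:ℝ) = 0 := by
              refine Finset.prod_eq_zero hαt ?_
              simp
            rw [hz]
            simp only [abs_zero, mul_zero]
            exact Set.indicator_nonneg (fun x _ => Real.rpow_nonneg (hm x.1 x.2).le β) _
          · rw [Set.indicator_of_mem (show α ∈ {x : A | x ∉ t} from hαt)]
            calc m (α:ℝ) ^ β * |ψ n (α:ℝ)| ≤ m (α:ℝ) ^ β * 1 := by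
                  refine mul_le_mul_of_nonneg_left ?_ (Real.rpow_nonneg (hm α α.2).le β)
                  rw [abs_of_nonneg (h0ψ n _)]; exact h1ψ n _
              _ = m (α:ℝ) ^ β := mul_one _
        · refine Summable.of_nonneg_of_le
            (fun α => mul_nonneg (Real.rpow_nonneg (hm α α.2).le β) (abs_nonneg _))
            (fun α => ?_) hsmβ
          calc m (α:ℝ) ^ β * |ψ n (α:ℝ)| ≤ m (α:ℝ) ^ β * 1 := by
                refine mul_le_mul_of_nonneg_left ?_ (Real.rpow_nonneg (hm α α.2).le β)
                rw [abs_of_nonneg (h0ψ n _)]; exact h1ψ n _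
            _ = m (α:ℝ) ^ β := mul_one _
      have hbnd : ∀ n, ∫ y, y * ψ n y ∂ν ≤ C * (ε / (C+1)) := by
        intro n
        refine le_trans (hmain (ψ n) (hcont n) (h0ψ n) (h1ψ n) ν hνle) ?_
        exact mul_le_mul_of_nonneg_left (le_trans (hts n) ht.le) hC
      -- dominated convergence
      have hAν : ∀ᵐ y ∂ν, y ∉ A := measure_eq_zero_iff_ae_notMem.mp (haveI : NullSingletonClass ν := ⟨hν⟩; hA.measure_zero ν)
      have hlim : Tendsto (fun n => ∫ y, y * ψ n y ∂ν) atTop (𝓝 (∫ y, y ∂ν)) := by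
        refine tendsto_integral_of_dominated_convergence (fun _ => M)
          (fun n => ((continuous_id.mul (hcont n)).aestronglyMeasurable))
          (integrable_const M) (fun n => ?_) ?_
        · filter_upwards [hνIccae] with y hy
          have : |y * ψ n y| ≤ M := by
            calc |y * ψ n y| = |y| * |ψ n y| := abs_mul _ _
              _ ≤ M * 1 := mul_le_mul (by rw [abs_of_nonneg hy.1]; exact hy.2)
                  (by rw [abs_of_nonneg (h0ψ n y)]; exact h1ψ n y) (abs_nonneg _) hM.le
              _ = M := mul_one M
          rw [Real.norm_eq_abs]; exact this
        · filter_upwards [hAν] with y hy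
          have hev : ∀ᶠ n : ℕ in atTop, ψ n y = 1 := by
            have h1 : ∀ f ∈ t, ∀ᶠ n : ℕ in atTop, min 1 ((n+1:ℝ) * |y - (f:ℝ)|) = 1 := by
              intro f _
              have hd : 0 < |y - (f:ℝ)| :=
                abs_pos.mpr (sub_ne_zero.mpr (fun h => hy (h ▸ f.2)))
              have h2 : Tendsto (fun n : ℕ => (n+1:ℝ) * |y - (f:ℝ)|) atTop atTop := by
                refine Tendsto.atTop_mul_const hd ?_
                exact tendsto_atTop_add_const_right _ 1 tendsto_natCast_atTop_atTop
              filter_upwards [h2.eventually_ge_atTop 1] with n hn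
              exact min_eq_left hn
            filter_upwards [(eventually_all_finset t).mpr h1] with n hn
            exact Finset.prod_eq_one hn
          refine Tendsto.congr' ?_ tendsto_const_nhds
          filter_upwards [hev] with n hn
          rw [hn, mul_one]
      have := le_of_tendsto hlim (Eventually.of_forall hbnd)
      calc ∫ y, y ∂ν ≤ C * (ε / (C+1)) := this
        _ ≤ (C+1) * (ε / (C+1)) := by
            refine mul_le_mul_of_nonneg_right (by linarith) (by positivity)
        _ = ε := by field_simp
        _ ≤ 0 + ε := by linarith
    exact le_antisymm (le_of_forall_pos_le_add hub) hnonneg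
  have hν0 : ν = 0 := by
    have hid_int : Integrable (fun y : ℝ => y) ν := by
      refine Integrable.mono' (integrable_const M) aestronglyMeasurable_id ?_
      filter_upwards [hνIccae] with y hy
      rw [Real.norm_eq_abs, abs_of_nonneg hy.1]; exact hy.2
    have h := (integral_eq_zero_iff_of_nonneg_ae
      (hνIccae.mono fun y hy => hy.1) hid_int).mp key1
    have h0 : ν {y : ℝ | y ≠ 0} = 0 := by
      have h1 := ae_iff.mp h
      simpa using h1
    have huniv : ν Set.univ = 0 := by
      refine le_antisymm ?_ (by simp)
      calc ν Set.univ ≤ ν ({0} ∪ {y : ℝ | y ≠ 0}) := by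
            refine measure_mono fun y _ => ?_
            by_cases hy : y = 0 <;> simp [hy]
        _ ≤ ν {0} + ν {y : ℝ | y ≠ 0} := measure_union_le _ _
        _ = 0 := by rw [hν 0, h0, add_zero]
    exact Measure.measure_univ_eq_zero.mp huniv
  -- Part 3
  have key3 : ∀ α₀ : A, (α₀:ℝ) * m (α₀:ℝ) ≤ C * m (α₀:ℝ) ^ β := by
    intro α₀
    refine le_of_forall_pos_le_add ?_
    intro ε hε
    obtain ⟨t, ht⟩ := htail (ε / (C+1)) (div_pos hε (by linarith))
    set ψ : ℕ → ℝ → ℝ := fun n y =>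
      max 0 (1 - (n+1:ℝ) * |y - (α₀:ℝ)|) *
        ∏ f ∈ t.erase α₀, min 1 ((n+1 : ℝ) * |y - (f : ℝ)|) with hψ
    have hcont : ∀ n, Continuous (ψ n) := by
      intro n
      refine Continuous.mul ?_ ?_
      · exact continuous_const.max
          (continuous_const.sub (continuous_const.mul ((continuous_id.sub continuous_const).abs)))
      · exact continuous_finset_prod _ fun f _ =>
          continuous_const.min (continuous_const.mul ((continuous_id.sub continuous_const).abs))
    have h0ψ : ∀ n y, 0 ≤ ψ n y := fun n y =>
      mul_nonneg (le_max_left _ _)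
        (Finset.prod_nonneg fun f _ => le_min zero_le_one (by positivity))
    have h1ψ : ∀ n y, ψ n y ≤ 1 := by
      intro n y
      have h1 : max 0 (1 - (n+1:ℝ) * |y - (α₀:ℝ)|) ≤ 1 := by
        refine max_le zero_le_one ?_
        have : 0 ≤ (n+1:ℝ) * |y - (α₀:ℝ)| := by positivity
        linarith
      have h2 : (∏ f ∈ t.erase α₀, min 1 ((n+1 : ℝ) * |y - (f : ℝ)|)) ≤ 1 :=
        Finset.prod_le_one (fun f _ => le_min zero_le_one (by positivity))
          (fun f _ => min_le_left _ _)
      calc ψ n y ≤ 1 * 1 := mul_le_mul h1 h2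
            (Finset.prod_nonneg fun f _ => le_min zero_le_one (by positivity)) zero_le_one
        _ = 1 := mul_one 1
    -- tsum bound, valid for every n
    have hts : ∀ n, (∑' α : A, m (α:ℝ) ^ β * |ψ n (α:ℝ)|)
        ≤ m (α₀:ℝ) ^ β + ε / (C+1) := by
      intro n
      have hb : ∀ α : A, m (α:ℝ) ^ β * |ψ n (α:ℝ)|
          ≤ (if α = α₀ then m (α₀:ℝ) ^ β else 0)
            + Set.indicator {x : A | x ∉ t} (fun α : A => m (α:ℝ) ^ β) α := by
        intro α
        have hψle : m (α:ℝ) ^ β * |ψ n (α:ℝ)| ≤ m (α:ℝ) ^ β := by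
          calc m (α:ℝ) ^ β * |ψ n (α:ℝ)| ≤ m (α:ℝ) ^ β * 1 := by
                refine mul_le_mul_of_nonneg_left ?_ (Real.rpow_nonneg (hm α α.2).le β)
                rw [abs_of_nonneg (h0ψ n _)]; exact h1ψ n _
            _ = m (α:ℝ) ^ β := mul_one _
        by_cases he : α = α₀
        · subst he
          simp only [if_pos rfl]
          exact le_add_of_le_of_nonneg hψle
            (Set.indicator_nonneg (fun x _ => Real.rpow_nonneg (hm x.1 x.2).le β) _)
        · rw [if_neg he, zero_add]
          by_cases hαt : α ∈ t
          · have hz : ψ n (α:ℝ) = 0 := by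
              have : α ∈ t.erase α₀ := Finset.mem_erase.mpr ⟨he, hαt⟩
              have hz2 : (∏ f ∈ t.erase α₀, min 1 ((n+1 : ℝ) * |(α:ℝ) - (f : ℝ)|)) = 0 := by
                refine Finset.prod_eq_zero this ?_
                simp
              rw [hψ]
              simp only [hz2, mul_zero]
            rw [hz]
            simp only [abs_zero, mul_zero]
            exact Set.indicator_nonneg (fun x _ => Real.rpow_nonneg (hm x.1 x.2).le β) _
          · rw [Set.indicator_of_mem (show α ∈ {x : A | x ∉ t} from hαt)]
            exact hψle
      have hsum1 : Summable fun α : A => m (α:ℝ) ^ β * |ψ n (α:ℝ)| := by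
        refine Summable.of_nonneg_of_le
          (fun α => mul_nonneg (Real.rpow_nonneg (hm α α.2).le β) (abs_nonneg _))
          (fun α => ?_) hsmβ
        calc m (α:ℝ) ^ β * |ψ n (α:ℝ)| ≤ m (α:ℝ) ^ β * 1 := by
              refine mul_le_mul_of_nonneg_left ?_ (Real.rpow_nonneg (hm α α.2).le β)
              rw [abs_of_nonneg (h0ψ n _)]; exact h1ψ n _
          _ = m (α:ℝ) ^ β := mul_one _
      have hsum2 : Summable fun α : A => (if α = α₀ then m (α₀:ℝ) ^ β else 0) :=
        summable_of_ne_finset_zero (s := {α₀}) (fun α hα => if_neg (by simpa using hα))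
      have hsum3 : Summable (Set.indicator {x : A | x ∉ t} (fun α : A => m (α:ℝ) ^ β)) :=
        hsmβ.indicator _
      calc (∑' α : A, m (α:ℝ) ^ β * |ψ n (α:ℝ)|)
          ≤ ∑' α : A, ((if α = α₀ then m (α₀:ℝ) ^ β else 0)
            + Set.indicator {x : A | x ∉ t} (fun α : A => m (α:ℝ) ^ β) α) :=
            Summable.tsum_le_tsum hb hsum1 (hsum2.add hsum3)
        _ = (∑' α : A, (if α = α₀ then m (α₀:ℝ) ^ β else 0))
            + ∑' α : A, Set.indicator {x : A | x ∉ t} (fun α : A => m (α:ℝ) ^ β) α :=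
            Summable.tsum_add hsum2 hsum3
        _ ≤ m (α₀:ℝ) ^ β + ε / (C+1) := by
            refine add_le_add ?_ ?_
            · exact le_of_eq (tsum_ite_eq α₀ (fun _ => m (α₀:ℝ) ^ β))
            · rw [← tsum_subtype {x : A | x ∉ t} (fun α : A => m (α:ℝ) ^ β)]
              exact ht.le
    -- lower bound for each n
    have hρ : (ENNReal.ofReal (m (α₀:ℝ)) • Measure.dirac ((α₀:ℝ))) ≤ μ :=
      le_trans (Measure.le_sum _ α₀) hμs
    have hlb : ∀ n, m (α₀:ℝ) * ((α₀:ℝ) * ψ n (α₀:ℝ)) ≤ C * (m (α₀:ℝ) ^ β + ε / (C+1)) := by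
      intro n
      have h1 := hmain (ψ n) (hcont n) (h0ψ n) (h1ψ n) _ hρ
      have h2 : ∫ y, y * ψ n y ∂(ENNReal.ofReal (m (α₀:ℝ)) • Measure.dirac ((α₀:ℝ)))
          = m (α₀:ℝ) * ((α₀:ℝ) * ψ n (α₀:ℝ)) := by
        rw [integral_smul_measure, integral_dirac, ENNReal.toReal_ofReal (hm α₀ α₀.2).le,
          smul_eq_mul]
      rw [h2] at h1
      exact h1.trans (mul_le_mul_of_nonneg_left (hts n) hC)
    -- ψ n α₀ → 1
    have hψlim : Tendsto (fun n => ψ n (α₀:ℝ)) atTop (𝓝 1) := by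
      have hev : ∀ᶠ n : ℕ in atTop, ψ n (α₀:ℝ) = 1 := by
        have h1 : ∀ f ∈ t.erase α₀, ∀ᶠ n : ℕ in atTop,
            min 1 ((n+1:ℝ) * |(α₀:ℝ) - (f:ℝ)|) = 1 := by
          intro f hf
          have hne : f ≠ α₀ := Finset.ne_of_mem_erase hf
          have hd : 0 < |(α₀:ℝ) - (f:ℝ)| := by
            refine abs_pos.mpr (sub_ne_zero.mpr ?_)
            intro h
            exact hne (Subtype.ext h.symm)
          have h2 : Tendsto (fun n : ℕ => (n+1:ℝ) * |(α₀:ℝ) - (f:ℝ)|) atTop atTop := by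
            refine Tendsto.atTop_mul_const hd ?_
            exact tendsto_atTop_add_const_right _ 1 tendsto_natCast_atTop_atTop
          filter_upwards [h2.eventually_ge_atTop 1] with n hn
          exact min_eq_left hn
        filter_upwards [(eventually_all_finset (t.erase α₀)).mpr h1] with n hn
        rw [hψ]
        simp only []
        rw [Finset.prod_eq_one hn, mul_one, sub_self, abs_zero, mul_zero, sub_zero,
          max_eq_right zero_le_one]
      exact Tendsto.congr' (by filter_upwards [hev] with n hn; exact hn.symm) tendsto_const_nhds
    have hLlim : Tendsto (fun n => m (α₀:ℝ) * ((α₀:ℝ) * ψ n (α₀:ℝ))) atTop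
        (𝓝 (m (α₀:ℝ) * ((α₀:ℝ) * 1))) :=
      (tendsto_const_nhds.mul (tendsto_const_nhds.mul hψlim))
    have hfinal : m (α₀:ℝ) * ((α₀:ℝ) * 1) ≤ C * (m (α₀:ℝ) ^ β + ε / (C+1)) :=
      le_of_tendsto hLlim (Eventually.of_forall hlb)
    have : (α₀:ℝ) * m (α₀:ℝ) ≤ C * m (α₀:ℝ) ^ β + C * (ε / (C+1)) := by
      rw [mul_one] at hfinal
      nlinarith [hfinal]
    refine this.trans ?_
    have : C * (ε / (C+1)) ≤ ε := by
      rw [div_eq_inv_mul]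
      have h1 : C * ((C+1)⁻¹ * ε) = (C / (C+1)) * ε := by field_simp
      rw [h1]
      have h2 : C / (C+1) ≤ 1 := by
        rw [div_le_one (by linarith)]; linarith
      nlinarith
    linarith
  have part3 : ∀ α ∈ A, α ≤ C * m α ^ (β - 1) := by
    intro α hα
    have h1 := key3 ⟨α, hα⟩
    simp only [Subtype.coe_mk] at h1
    have h2 : α * m α ≤ (C * m α ^ (β - 1)) * m α := by
      calc α * m α ≤ C * m α ^ β := h1
        _ = (C * m α ^ (β - 1)) * m α := by rw [hrpow_split ⟨α, hα⟩]; ring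
    exact le_of_mul_le_mul_right h2 (hm α hα)
  -- Part 4
  have part4 : ∀ ε : ℝ, 0 < ε → (A \ Set.Ioo (-ε) ε).Finite := by
    intro ε hε
    rcases hC.eq_or_lt with hC0 | hCpos
    · refine Set.Finite.subset (Set.finite_empty) ?_
      intro x hx
      exfalso
      have h1 := part3 x hx.1
      rw [← hC0, zero_mul] at h1
      have h2 := (hAmem x hx.1).1
      have hx0 : x = 0 := le_antisymm h1 h2
      exact hx.2 (by rw [hx0]; exact ⟨by linarith, hε⟩)
    · set c : ℝ := (ε / C) ^ ((β - 1)⁻¹) with hc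
      have hcpos : 0 < c := Real.rpow_pos_of_pos (div_pos hε hCpos) _
      have hfin2 : {α : A | c ≤ m (α:ℝ)}.Finite := by
        have h1 : Tendsto (fun α : A => m (α:ℝ)) cofinite (𝓝 0) :=
          hsm.tendsto_cofinite_zero
        have h2 : ∀ᶠ α : A in cofinite, m (α:ℝ) < c := h1.eventually_lt_const hcpos
        have h3 : {α : A | ¬ m (α:ℝ) < c}.Finite := by
          simpa [Filter.eventually_cofinite] using h2
        exact h3.subset fun α hα => not_lt.mpr hα
      refine Set.Finite.subset (hfin2.image (fun α : A => (α:ℝ))) ?_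
      intro x hx
      have hxA := hx.1
      have hx0 : (0:ℝ) ≤ x := (hAmem x hxA).1
      have hεx : ε ≤ x := by
        by_contra hlt
        push_neg at hlt
        exact hx.2 ⟨by linarith, hlt⟩
      have h1 : ε ≤ C * m x ^ (β-1) := le_trans hεx (part3 x hxA)
      have h2 : ε / C ≤ m x ^ (β-1) :=
        (div_le_iff₀ hCpos).mpr (by rw [mul_comm]; exact h1)
      have h4 := Real.rpow_le_rpow (div_nonneg hε.le hCpos.le) h2 (inv_nonneg.mpr hβ0)
      rw [Real.rpow_rpow_inv (hm x hxA).le hβne] at h4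
      exact ⟨⟨x, hxA⟩, h4, rfl⟩
  refine ⟨hν0, ?_, part3, part4⟩
  rw [hdecomp, hν0, zero_add]
end

section
/- Let (z₁,z₂) be a solution on [1,∞) of the two-vortex system in the half-plane with strengths m₁, m₂ > 0, and set L = m₁ y₁(1) + m₂ y₂(1). Suppose there exists M > 0 such that: (i) x₂(1) − x₁(1) > M; (ii) L > m₂ y₂(1) + L²/(π M³); and (iii) m₂ / (2(y₂(1) + L²/(π m₂ M³))) − m₁² / (2(L − m₂ y₂(1) − L²/(π M³))) − 2·max(m₁,m₂)/M > 2πM. Then x₂(t) − x₁(t) > M·t for all t ≥ 1. -/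
set_option maxHeartbeats 1000000

lemma lemA (m₁ m₂ y₁ y₂ u L M t : ℝ) (hm₁ : 0 < m₁) (hm₂ : 0 < m₂)
    (hy₁ : 0 < y₁) (hy₂ : 0 < y₂) (hM : 0 < M) (ht : 1 ≤ t)
    (hd : M * t < -u) (hLc : m₁ * y₁ + m₂ * y₂ = L) :
    (m₁ * (-u) / (u ^ 2 + (y₁ - y₂) ^ 2) + m₁ * u / (u ^ 2 + (y₁ + y₂) ^ 2)) / (2 * Real.pi)
      ≤ 2 * (L ^ 2 / (Real.pi * m₂ * M ^ 3)) / t ^ 3 := by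
  have hπ := Real.pi_pos
  have ht0 : (0:ℝ) < t := lt_of_lt_of_le one_pos ht
  have hMt : 0 < M * t := mul_pos hM ht0
  have hu : 0 < -u := lt_trans hMt hd
  have hu2 : 0 < u ^ 2 := by nlinarith [mul_pos hu hu]
  have hD1 : 0 < u ^ 2 + (y₁ - y₂) ^ 2 := by positivity
  have hD2 : 0 < u ^ 2 + (y₁ + y₂) ^ 2 := by positivity
  have hrw : m₁ * (-u) / (u ^ 2 + (y₁ - y₂) ^ 2) + m₁ * u / (u ^ 2 + (y₁ + y₂) ^ 2)
      = 4 * m₁ * (-u) * (y₁ * y₂) / ((u ^ 2 + (y₁ - y₂) ^ 2) * (u ^ 2 + (y₁ + y₂) ^ 2)) := by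
    field_simp
    ring
  rw [hrw, div_div, div_le_div_iff₀ (by positivity) (by positivity)]
  have hrhs : 2 * (L ^ 2 / (Real.pi * m₂ * M ^ 3)) * ((u ^ 2 + (y₁ - y₂) ^ 2) * (u ^ 2 + (y₁ + y₂) ^ 2) * (2 * Real.pi))
      = 4 * L ^ 2 * ((u ^ 2 + (y₁ - y₂) ^ 2) * (u ^ 2 + (y₁ + y₂) ^ 2)) / (m₂ * M ^ 3) := by
    field_simp
    ring
  rw [hrhs, le_div_iff₀ (by positivity)]
  have hLe : L ^ 2 = (m₁ * y₁ + m₂ * y₂) ^ 2 := by rw [hLc]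
  have hL2 : 4 * (m₁ * y₁) * (m₂ * y₂) ≤ L ^ 2 := by nlinarith [sq_nonneg (m₁ * y₁ - m₂ * y₂)]
  have h3p : (M * t) ^ 3 ≤ (-u) ^ 3 := pow_le_pow_left₀ hMt.le hd.le 3
  have h1 : M ^ 3 * t ^ 3 * (-u) ≤ u ^ 2 * u ^ 2 := by
    nlinarith [mul_le_mul_of_nonneg_right h3p hu.le]
  have hDD : u ^ 2 * u ^ 2 ≤ (u ^ 2 + (y₁ - y₂) ^ 2) * (u ^ 2 + (y₁ + y₂) ^ 2) := by
    nlinarith [sq_nonneg (y₁ - y₂), sq_nonneg (y₁ + y₂), sq_nonneg u]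
  have hkey : 4 * (m₁ * y₁) * (m₂ * y₂) * (u ^ 2 * u ^ 2)
      ≤ L ^ 2 * ((u ^ 2 + (y₁ - y₂) ^ 2) * (u ^ 2 + (y₁ + y₂) ^ 2)) :=
    mul_le_mul hL2 hDD (by positivity) (by nlinarith)
  have h2 : 4 * (m₁ * y₁) * (m₂ * y₂) * (M ^ 3 * t ^ 3 * (-u))
      ≤ 4 * (m₁ * y₁) * (m₂ * y₂) * (u ^ 2 * u ^ 2) :=
    mul_le_mul_of_nonneg_left h1 (by positivity)
  linarith [hkey, h2, mul_nonneg (sq_nonneg L) (mul_pos hD1 hD2).le]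

lemma lemB (m₁ m₂ y₁ y₂ d M b a' mx : ℝ) (hm₁ : 0 < m₁) (hm₂ : 0 < m₂)
    (hy₁ : 0 < y₁) (hy₂ : 0 < y₂) (hM : 0 < M) (hd : M < d)
    (hb : y₂ ≤ b) (ha : a' ≤ m₁ * y₁) (ha0 : 0 < a')
    (hmx1 : m₁ ≤ mx) (hmx2 : m₂ ≤ mx)
    (hsep : m₂ / (2 * b) - m₁ ^ 2 / (2 * a') - 2 * mx / M > 2 * Real.pi * M) :
    M < (m₂ / (2 * y₂) + m₁ * (y₁ - y₂) / (d ^ 2 + (y₁ - y₂) ^ 2)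
          + m₁ * (y₁ + y₂) / (d ^ 2 + (y₁ + y₂) ^ 2)) / (2 * Real.pi)
        - (m₁ / (2 * y₁) + m₂ * (y₂ - y₁) / (d ^ 2 + (y₁ - y₂) ^ 2)
          + m₂ * (y₁ + y₂) / (d ^ 2 + (y₁ + y₂) ^ 2)) / (2 * Real.pi) := by
  have hπ := Real.pi_pos
  have hmx0 : 0 < mx := lt_of_lt_of_le hm₁ hmx1
  have hd0 : 0 < d := lt_trans hM hd
  have hD1 : 0 < d ^ 2 + (y₁ - y₂) ^ 2 := by positivity
  have hD2 : 0 < d ^ 2 + (y₁ + y₂) ^ 2 := by positivity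
  have hb0 : 0 < b := lt_of_lt_of_le hy₂ hb
  have h1 : m₂ / (2 * b) ≤ m₂ / (2 * y₂) := by gcongr
  have h2 : m₁ / (2 * y₁) ≤ m₁ ^ 2 / (2 * a') := by
    rw [show m₁ / (2 * y₁) = m₁ ^ 2 / (2 * (m₁ * y₁)) by field_simp]
    gcongr
  have hQ1 : -(1 / (2 * d)) ≤ (y₁ - y₂) / (d ^ 2 + (y₁ - y₂) ^ 2) := by
    rw [neg_le, ← neg_div, div_le_div_iff₀ hD1 (by positivity)]
    nlinarith [sq_nonneg (d + (y₁ - y₂))]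
  have hQ2 : (y₁ + y₂) / (d ^ 2 + (y₁ + y₂) ^ 2) ≤ 1 / (2 * d) := by
    rw [div_le_div_iff₀ hD2 (by positivity)]
    nlinarith [sq_nonneg (d - (y₁ + y₂))]
  have hQ2' : 0 ≤ (y₁ + y₂) / (d ^ 2 + (y₁ + y₂) ^ 2) := by positivity
  have hdM : 1 / (2 * d) ≤ 1 / (2 * M) := by gcongr
  have h3 : -((m₁ + m₂) / (2 * M)) ≤ (m₁ + m₂) * ((y₁ - y₂) / (d ^ 2 + (y₁ - y₂) ^ 2)) := by
    have h := mul_le_mul_of_nonneg_left hQ1 (by positivity : (0:ℝ) ≤ m₁ + m₂)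
    have h' : (m₁ + m₂) / (2 * d) ≤ (m₁ + m₂) / (2 * M) := by gcongr
    have e : (m₁ + m₂) * -(1 / (2 * d)) = -((m₁ + m₂) / (2 * d)) := by ring
    linarith [e ▸ h]
  have h4 : -(mx / (2 * M)) ≤ (m₁ - m₂) * ((y₁ + y₂) / (d ^ 2 + (y₁ + y₂) ^ 2)) := by
    set Q := (y₁ + y₂) / (d ^ 2 + (y₁ + y₂) ^ 2) with hQdef
    have hQM : Q ≤ 1 / (2 * M) := le_trans hQ2 hdM
    rcases le_total m₂ m₁ with h | h
    · have h5 : 0 ≤ (m₁ - m₂) * Q := mul_nonneg (by linarith) hQ2'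
      have h6 : 0 ≤ mx / (2 * M) := by positivity
      linarith
    · have h5 : (m₂ - m₁) * Q ≤ (m₂ - m₁) * (1 / (2 * M)) :=
        mul_le_mul_of_nonneg_left hQM (by linarith)
      have h6 : (m₂ - m₁) * (1 / (2 * M)) ≤ mx * (1 / (2 * M)) :=
        mul_le_mul_of_nonneg_right (by linarith) (by positivity)
      have e : mx * (1 / (2 * M)) = mx / (2 * M) := by ring
      linarith [h5, h6, e]
  have hsum : (m₁ + m₂) / (2 * M) + mx / (2 * M) ≤ 2 * mx / M := by
    rw [← add_div, div_le_div_iff₀ (by positivity) hM]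
    nlinarith
  have hAB : (m₂ / (2 * y₂) + m₁ * (y₁ - y₂) / (d ^ 2 + (y₁ - y₂) ^ 2)
          + m₁ * (y₁ + y₂) / (d ^ 2 + (y₁ + y₂) ^ 2))
        - (m₁ / (2 * y₁) + m₂ * (y₂ - y₁) / (d ^ 2 + (y₁ - y₂) ^ 2)
          + m₂ * (y₁ + y₂) / (d ^ 2 + (y₁ + y₂) ^ 2))
      = m₂ / (2 * y₂) - m₁ / (2 * y₁)
        + (m₁ + m₂) * ((y₁ - y₂) / (d ^ 2 + (y₁ - y₂) ^ 2))
        + (m₁ - m₂) * ((y₁ + y₂) / (d ^ 2 + (y₁ + y₂) ^ 2)) := by ring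
  rw [div_sub_div_same, lt_div_iff₀ (by positivity : (0:ℝ) < 2 * Real.pi), hAB]
  nlinarith [h1, h2, h3, h4, hsum, hsep]



/-- The two-vortex system in the half-plane with strengths `m₁, m₂ > 0`:
two C¹ curves `z₁ = (x₁,y₁)` and `z₂ = (x₂,y₂)` with `y₁, y₂ > 0`, whose
motion is induced by the other vortex and the two image vortices
(`z̄₂ = (x₂,-y₂)`, and `|z₁-z₂|² = (x₁-x₂)² + (y₁-y₂)²`,
`|z₁-z̄₂|² = (x₁-x₂)² + (y₁+y₂)²`). -/
def TwoVortexSystem (m₁ m₂ : ℝ) (x₁ y₁ x₂ y₂ : ℝ → ℝ) : Prop :=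
  ∀ t : ℝ, 1 ≤ t →
    0 < y₁ t ∧ 0 < y₂ t ∧
    HasDerivAt x₁ ((m₁ / (2 * y₁ t)
      + m₂ * (y₂ t - y₁ t) / ((x₁ t - x₂ t) ^ 2 + (y₁ t - y₂ t) ^ 2)
      + m₂ * (y₁ t + y₂ t) / ((x₁ t - x₂ t) ^ 2 + (y₁ t + y₂ t) ^ 2)) / (2 * Real.pi)) t ∧
    HasDerivAt y₁ ((m₂ * (x₁ t - x₂ t) / ((x₁ t - x₂ t) ^ 2 + (y₁ t - y₂ t) ^ 2)
      + m₂ * (x₂ t - x₁ t) / ((x₁ t - x₂ t) ^ 2 + (y₁ t + y₂ t) ^ 2)) / (2 * Real.pi)) t ∧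
    HasDerivAt x₂ ((m₂ / (2 * y₂ t)
      + m₁ * (y₁ t - y₂ t) / ((x₁ t - x₂ t) ^ 2 + (y₁ t - y₂ t) ^ 2)
      + m₁ * (y₁ t + y₂ t) / ((x₁ t - x₂ t) ^ 2 + (y₁ t + y₂ t) ^ 2)) / (2 * Real.pi)) t ∧
    HasDerivAt y₂ ((m₁ * (x₂ t - x₁ t) / ((x₁ t - x₂ t) ^ 2 + (y₁ t - y₂ t) ^ 2)
      + m₁ * (x₁ t - x₂ t) / ((x₁ t - x₂ t) ^ 2 + (y₁ t + y₂ t) ^ 2)) / (2 * Real.pi)) t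

/-- Proposition A.1: sufficient conditions for linear separation of two
vortices above a flat wall: with `L = m₁ y₁(1) + m₂ y₂(1)`, if
`x₂(1) - x₁(1) > M`, `L > m₂ y₂(1) + L²/(π M³)` and
`m₂/(2(y₂(1) + L²/(π m₂ M³))) - m₁²/(2(L - m₂ y₂(1) - L²/(π M³)))
  - 2 max(m₁,m₂)/M > 2πM`, then `x₂(t) - x₁(t) > M t` for all `t ≥ 1`. -/
theorem stmt_18 (m₁ m₂ : ℝ) (hm₁ : 0 < m₁) (hm₂ : 0 < m₂)
    (x₁ y₁ x₂ y₂ : ℝ → ℝ) (hsys : TwoVortexSystem m₁ m₂ x₁ y₁ x₂ y₂)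
    (M : ℝ) (hM : 0 < M)
    (hsep1 : x₂ 1 - x₁ 1 > M)
    (hsep2 : m₁ * y₁ 1 + m₂ * y₂ 1 >
      m₂ * y₂ 1 + (m₁ * y₁ 1 + m₂ * y₂ 1) ^ 2 / (Real.pi * M ^ 3))
    (hsep3 : m₂ / (2 * (y₂ 1 + (m₁ * y₁ 1 + m₂ * y₂ 1) ^ 2 / (Real.pi * m₂ * M ^ 3)))
      - m₁ ^ 2 / (2 * (m₁ * y₁ 1 + m₂ * y₂ 1 - m₂ * y₂ 1
          - (m₁ * y₁ 1 + m₂ * y₂ 1) ^ 2 / (Real.pi * M ^ 3)))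
      - 2 * max m₁ m₂ / M > 2 * Real.pi * M) :
    ∀ t : ℝ, 1 ≤ t → x₂ t - x₁ t > M * t := by
  have hπ := Real.pi_pos
  set L := m₁ * y₁ 1 + m₂ * y₂ 1 with hLdef
  have hy11 : 0 < y₁ 1 := (hsys 1 le_rfl).1
  have hy21 : 0 < y₂ 1 := (hsys 1 le_rfl).2.1
  have hL0 : 0 < L := by positivity
  set C := L ^ 2 / (Real.pi * m₂ * M ^ 3) with hCdef
  have hC0 : 0 < C := by positivity
  set b := y₂ 1 + C with hbdef
  set a' := L - m₂ * y₂ 1 - L ^ 2 / (Real.pi * M ^ 3) with hadef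
  have ha0 : 0 < a' := by rw [hadef]; linarith [hsep2]
  clear_value L C b a'
  -- conservation of m₁ y₁ + m₂ y₂
  have hF : ∀ t : ℝ, 1 ≤ t → m₁ * y₁ t + m₂ * y₂ t = L := by
    intro t ht
    have key := constant_of_has_deriv_right_zero (f := fun s => m₁ * y₁ s + m₂ * y₂ s)
      (a := 1) (b := t)
      (fun s hs => (((hsys s hs.1).2.2.2.1.const_mul m₁).add
        ((hsys s hs.1).2.2.2.2.2.const_mul m₂)).continuousAt.continuousWithinAt)
      (fun s hs => by
        have h := ((hsys s hs.1).2.2.2.1.const_mul m₁).add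
          ((hsys s hs.1).2.2.2.2.2.const_mul m₂)
        have e : m₁ * ((m₂ * (x₁ s - x₂ s) / ((x₁ s - x₂ s) ^ 2 + (y₁ s - y₂ s) ^ 2)
            + m₂ * (x₂ s - x₁ s) / ((x₁ s - x₂ s) ^ 2 + (y₁ s + y₂ s) ^ 2)) / (2 * Real.pi))
            + m₂ * ((m₁ * (x₂ s - x₁ s) / ((x₁ s - x₂ s) ^ 2 + (y₁ s - y₂ s) ^ 2)
            + m₁ * (x₁ s - x₂ s) / ((x₁ s - x₂ s) ^ 2 + (y₁ s + y₂ s) ^ 2)) / (2 * Real.pi)) = 0 := by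
          ring
        rw [e] at h
        exact h.hasDerivWithinAt)
      t ⟨ht, le_refl t⟩
    rw [hLdef]
    simpa using key
  -- main argument by contradiction
  intro t ht
  by_contra hcon
  push_neg at hcon
  -- the bad set
  set g : ℝ → ℝ := fun s => x₂ s - x₁ s - M * s with hgdef
  have hgderiv : ∀ s : ℝ, 1 ≤ s → HasDerivAt g
      ((m₂ / (2 * y₂ s)
        + m₁ * (y₁ s - y₂ s) / ((x₁ s - x₂ s) ^ 2 + (y₁ s - y₂ s) ^ 2)
        + m₁ * (y₁ s + y₂ s) / ((x₁ s - x₂ s) ^ 2 + (y₁ s + y₂ s) ^ 2)) / (2 * Real.pi)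
      - (m₁ / (2 * y₁ s)
        + m₂ * (y₂ s - y₁ s) / ((x₁ s - x₂ s) ^ 2 + (y₁ s - y₂ s) ^ 2)
        + m₂ * (y₁ s + y₂ s) / ((x₁ s - x₂ s) ^ 2 + (y₁ s + y₂ s) ^ 2)) / (2 * Real.pi)
      - M * 1) s := by
    intro s hs
    exact ((hsys s hs).2.2.2.2.1.sub (hsys s hs).2.2.1).sub ((hasDerivAt_id s).const_mul M)
  have hgc : ∀ s : ℝ, 1 ≤ s → ContinuousAt g s :=
    fun s hs => (hgderiv s hs).continuousAt
  set A := Set.Icc (1:ℝ) t ∩ g ⁻¹' Set.Iic 0 with hAdef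
  have hAclosed : IsClosed A :=
    ContinuousOn.preimage_isClosed_of_isClosed
      (fun s hs => (hgc s hs.1).continuousWithinAt) isClosed_Icc isClosed_Iic
  have htA : t ∈ A := ⟨⟨ht, le_refl t⟩, by simp [hgdef]; linarith⟩
  have hAbdd : BddBelow A := ⟨1, fun s hs => hs.1.1⟩
  set T := sInf A with hTdef
  have hTA : T ∈ A := hAclosed.csInf_mem ⟨t, htA⟩ hAbdd
  have hT1 : 1 ≤ T := hTA.1.1
  have hTt : T ≤ t := hTA.1.2
  have hgT : g T ≤ 0 := hTA.2
  have hg1 : 0 < g 1 := by simp [hgdef]; linarith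
  have hT1' : 1 < T := by
    rcases lt_or_eq_of_le hT1 with h | h
    · exact h
    · exfalso; rw [← h] at hgT; linarith
  have hlow : ∀ s : ℝ, 1 ≤ s → s < T → 0 < g s := by
    intro s h1s hsT
    by_contra h
    push_neg at h
    have hsA : s ∈ A := ⟨⟨h1s, le_trans hsT.le hTt⟩, h⟩
    exact absurd (csInf_le hAbdd hsA) (not_le.2 hsT)
  -- the auxiliary function ψ and its monotonicity
  set ψ : ℝ → ℝ := fun s => y₂ s + C * (s * s)⁻¹ with hψdef
  have hψderiv : ∀ s : ℝ, 1 ≤ s → HasDerivAt ψ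
      ((m₁ * (x₂ s - x₁ s) / ((x₁ s - x₂ s) ^ 2 + (y₁ s - y₂ s) ^ 2)
        + m₁ * (x₁ s - x₂ s) / ((x₁ s - x₂ s) ^ 2 + (y₁ s + y₂ s) ^ 2)) / (2 * Real.pi)
      + C * (-(1 * s + s * 1) / (s * s) ^ 2)) s := by
    intro s hs
    have hs0 : s ≠ 0 := by intro h; rw [h] at hs; linarith
    exact (hsys s hs).2.2.2.2.2.add
      ((((hasDerivAt_id s).mul (hasDerivAt_id s)).inv (mul_ne_zero hs0 hs0)).const_mul C)
  have hanti : AntitoneOn ψ (Set.Icc 1 T) := by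
    apply antitoneOn_of_deriv_nonpos (convex_Icc 1 T)
    · exact fun s hs => ((hψderiv s hs.1).continuousAt).continuousWithinAt
    · rw [interior_Icc]
      exact fun s hs => ((hψderiv s hs.1.le).differentiableAt).differentiableWithinAt
    · intro s hs
      rw [interior_Icc] at hs
      have hs1 : 1 ≤ s := hs.1.le
      have hs0 : (0:ℝ) < s := by linarith
      rw [(hψderiv s hs1).deriv]
      have hA := lemA m₁ m₂ (y₁ s) (y₂ s) (x₁ s - x₂ s) L M s hm₁ hm₂
        (hsys s hs1).1 (hsys s hs1).2.1 hM hs1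
        (by have := hlow s hs1 hs.2; simp only [hgdef] at this; linarith)
        (hF s hs1)
      simp only [neg_sub] at hA
      have eC : C * (-(1 * s + s * 1) / (s * s) ^ 2) = -(2 * (C / s ^ 3)) := by
        field_simp
        ring
      have e2 : 2 * (L ^ 2 / (Real.pi * m₂ * M ^ 3)) / s ^ 3 = 2 * (C / s ^ 3) := by
        rw [hCdef]; ring
      rw [e2] at hA
      rw [eC]
      linarith
  -- bounds on y₂ and y₁ on [1, T]
  have hyb : ∀ s : ℝ, s ∈ Set.Icc (1:ℝ) T → y₂ s ≤ b := by
    intro s hs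
    have h := hanti (Set.left_mem_Icc.2 hT1) hs hs.1
    have hψ1 : ψ 1 = y₂ 1 + C := by simp [hψdef]
    have hpos : 0 ≤ C * (s * s)⁻¹ := by
      have : (0:ℝ) < s := lt_of_lt_of_le one_pos hs.1
      positivity
    rw [hψ1] at h
    simp only [hψdef] at h
    rw [hbdef]
    linarith
  have hy1b : ∀ s : ℝ, s ∈ Set.Icc (1:ℝ) T → a' ≤ m₁ * y₁ s := by
    intro s hs
    have h1 := hF s hs.1
    have h2 := hyb s hs
    have h3 : m₂ * y₂ s ≤ m₂ * b := mul_le_mul_of_nonneg_left h2 hm₂.le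
    have h4 : m₂ * b = m₂ * y₂ 1 + L ^ 2 / (Real.pi * M ^ 3) := by
      rw [hbdef, hCdef]
      field_simp
    rw [hadef]
    linarith
  -- strict monotonicity of g on [1, T]
  have hmono : StrictMonoOn g (Set.Icc 1 T) := by
    apply strictMonoOn_of_deriv_pos (convex_Icc 1 T)
    · exact fun s hs => (hgc s hs.1).continuousWithinAt
    · intro s hs
      rw [interior_Icc] at hs
      have hs1 : 1 ≤ s := hs.1.le
      rw [(hgderiv s hs1).deriv]
      have hB := lemB m₁ m₂ (y₁ s) (y₂ s) (x₂ s - x₁ s) M b a' (max m₁ m₂) hm₁ hm₂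
        (hsys s hs1).1 (hsys s hs1).2.1 hM
        (by
          have h := hlow s hs1 hs.2
          simp only [hgdef] at h
          nlinarith)
        (hyb s ⟨hs1, hs.2.le⟩) (hy1b s ⟨hs1, hs.2.le⟩) ha0
        (le_max_left m₁ m₂) (le_max_right m₁ m₂) hsep3
      have he : (x₂ s - x₁ s) ^ 2 = (x₁ s - x₂ s) ^ 2 := by ring
      rw [he] at hB
      linarith
  -- contradiction
  have hfin := hmono (Set.left_mem_Icc.2 hT1) (Set.right_mem_Icc.2 hT1) hT1'
  linarith
end
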